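/- arXiv:2111.08392 — 9 statements merged into one kernel-verified Lean document; each statement's English description precedes it below -/
import Mathlib

section
/- For every real Banach space X with dim X ≥ 2, one has Ω(X) ≤ 8/5; that is, for all unit vectors x, y ∈ X with ‖x+y‖ = ‖x−y‖ one has (‖x+2y‖² + ‖2x+y‖²)/(5‖x+y‖²) ≤ 8/5. -/
/-- The orthogonal geometric constant
`Ω(X) = sup{ (‖x+2y‖² + ‖2x+y‖²)/(5‖x+y‖²) : x, y ∈ S_X, x ⊥_I y }`. -/
noncomputable def OmegaConst (X : Type*) [NormedAddCommGroup X] [NormedSpace ℝ X] : ℝ :=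
  sSup { r : ℝ | ∃ x y : X, ‖x‖ = 1 ∧ ‖y‖ = 1 ∧ ‖x + y‖ = ‖x - y‖ ∧
    r = (‖x + (2 : ℝ) • y‖ ^ 2 + ‖(2 : ℝ) • x + y‖ ^ 2) / (5 * ‖x + y‖ ^ 2) }

lemma key_bound {X : Type*} [NormedAddCommGroup X] [NormedSpace ℝ X]
    (x y : X) (hx : ‖x‖ = 1) (hy : ‖y‖ = 1) (hI : ‖x + y‖ = ‖x - y‖) :
    (‖x + (2 : ℝ) • y‖ ^ 2 + ‖(2 : ℝ) • x + y‖ ^ 2) / (5 * ‖x + y‖ ^ 2) ≤ 8 / 5 := by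
  set c := ‖x + y‖ with hc
  have hc1 : 1 ≤ c := by
    have h2 : ‖(2 : ℝ) • x‖ = 2 := by
      rw [norm_smul, hx]; norm_num
    have : (2 : ℝ) • x = (x + y) + (x - y) := by
      rw [two_smul]; abel
    have h := norm_add_le (x + y) (x - y)
    rw [← this, h2, ← hI] at h
    linarith
  have h1 : ‖x + (2 : ℝ) • y‖ ≤ c + 1 := by
    have : x + (2 : ℝ) • y = (x + y) + y := by rw [two_smul]; abel
    rw [this]
    calc ‖(x + y) + y‖ ≤ ‖x + y‖ + ‖y‖ := norm_add_le _ _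
    _ = c + 1 := by rw [hy]
  have h2 : ‖(2 : ℝ) • x + y‖ ≤ c + 1 := by
    have : (2 : ℝ) • x + y = (x + y) + x := by rw [two_smul]; abel
    rw [this]
    calc ‖(x + y) + x‖ ≤ ‖x + y‖ + ‖x‖ := norm_add_le _ _
    _ = c + 1 := by rw [hx]
  have hcpos : (0:ℝ) < 5 * c ^ 2 := by nlinarith
  rw [div_le_div_iff₀ hcpos (by norm_num : (0:ℝ) < 5)]
  have ha : ‖x + (2 : ℝ) • y‖ ^ 2 ≤ (c + 1) ^ 2 := by
    have := norm_nonneg (x + (2 : ℝ) • y); nlinarith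
  have hb : ‖(2 : ℝ) • x + y‖ ^ 2 ≤ (c + 1) ^ 2 := by
    have := norm_nonneg ((2 : ℝ) • x + y); nlinarith
  nlinarith

/-- For every real Banach space `X` with `dim X ≥ 2`, one has `Ω(X) ≤ 8/5`; that is,
for all unit vectors `x, y` with `‖x+y‖ = ‖x−y‖` one has
`(‖x+2y‖² + ‖2x+y‖²)/(5‖x+y‖²) ≤ 8/5`. -/
theorem omegaConst_le_eight_fifths
    {X : Type*} [NormedAddCommGroup X] [NormedSpace ℝ X] [CompleteSpace X]
    (hdim : 2 ≤ Module.rank ℝ X) :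
    OmegaConst X ≤ 8 / 5 ∧
      ∀ x y : X, ‖x‖ = 1 → ‖y‖ = 1 → ‖x + y‖ = ‖x - y‖ →
        (‖x + (2 : ℝ) • y‖ ^ 2 + ‖(2 : ℝ) • x + y‖ ^ 2) / (5 * ‖x + y‖ ^ 2) ≤ 8 / 5 := by
  constructor
  · apply Real.sSup_le
    · rintro r ⟨x, y, hx, hy, hI, rfl⟩
      exact key_bound x y hx hy hI
    · norm_num
  · exact fun x y hx hy hI => key_bound x y hx hy hI
end

section
/- Let X = ℝ² equipped with the maximum norm ‖(x₁,x₂)‖ = max{|x₁|, |x₂|}. Then Ω(X) = 8/5. -/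
lemma omega_mem85 : (8/5 : ℝ) ∈ { r : ℝ | ∃ x y : ℝ × ℝ, ‖x‖ = 1 ∧ ‖y‖ = 1 ∧ ‖x + y‖ = ‖x - y‖ ∧
    r = (‖x + (2 : ℝ) • y‖ ^ 2 + ‖(2 : ℝ) • x + y‖ ^ 2) / (5 * ‖x + y‖ ^ 2) } := by
  refine ⟨(1, 0), (0, 1), ?_, ?_, ?_, ?_⟩
  · simp [Prod.norm_def]
  · simp [Prod.norm_def]
  · have h1 : ((1:ℝ), (0:ℝ)) + (0, 1) = (1, 1) := by norm_num
    have h2 : ((1:ℝ), (0:ℝ)) - (0, 1) = (1, -1) := by norm_num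
    rw [h1, h2]
    simp [Prod.norm_def]
  · have h1 : ((1:ℝ), (0:ℝ)) + (2:ℝ) • ((0:ℝ), (1:ℝ)) = (1, 2) := by
      norm_num [Prod.smul_mk]
    have h2 : (2:ℝ) • ((1:ℝ), (0:ℝ)) + ((0:ℝ), (1:ℝ)) = (2, 1) := by
      norm_num [Prod.smul_mk]
    have h3 : ((1:ℝ), (0:ℝ)) + ((0:ℝ), (1:ℝ)) = (1, 1) := by norm_num
    rw [h1, h2, h3]
    have e1 : ‖((1:ℝ), (2:ℝ))‖ = 2 := by
      simp [Prod.norm_def]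
    have e2 : ‖((2:ℝ), (1:ℝ))‖ = 2 := by
      simp [Prod.norm_def]
    have e3 : ‖((1:ℝ), (1:ℝ))‖ = 1 := by
      simp [Prod.norm_def]
    rw [e1, e2, e3]
    norm_num

lemma omega_ub {X : Type*} [NormedAddCommGroup X] [NormedSpace ℝ X] :
    ∀ r ∈ { r : ℝ | ∃ x y : X, ‖x‖ = 1 ∧ ‖y‖ = 1 ∧ ‖x + y‖ = ‖x - y‖ ∧
      r = (‖x + (2 : ℝ) • y‖ ^ 2 + ‖(2 : ℝ) • x + y‖ ^ 2) / (5 * ‖x + y‖ ^ 2) },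
    r ≤ 8/5 := by
  rintro r ⟨x, y, hx, hy, hiso, rfl⟩
  set c := ‖x + y‖ with hc
  have hc1 : (1:ℝ) ≤ c := by
    have h2x : ‖x + x‖ = 2 := by
      rw [← two_smul ℝ x, norm_smul]
      simp [hx]
    have htri : ‖x + x‖ ≤ ‖x + y‖ + ‖x - y‖ := by
      have : x + x = (x + y) + (x - y) := by abel
      rw [this]; exact norm_add_le _ _
    rw [h2x, ← hiso] at htri
    linarith
  have hA : ‖x + (2:ℝ) • y‖ ≤ c + 1 := by
    have heq : x + (2:ℝ) • y = (x + y) + y := by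
      rw [two_smul]; abel
    rw [heq]
    calc ‖(x + y) + y‖ ≤ ‖x + y‖ + ‖y‖ := norm_add_le _ _
      _ = c + 1 := by rw [hy]
  have hB : ‖(2:ℝ) • x + y‖ ≤ c + 1 := by
    have heq : (2:ℝ) • x + y = (x + y) + x := by
      rw [two_smul]; abel
    rw [heq]
    calc ‖(x + y) + x‖ ≤ ‖x + y‖ + ‖x‖ := norm_add_le _ _
      _ = c + 1 := by rw [hx]
  have hA0 : (0:ℝ) ≤ ‖x + (2:ℝ) • y‖ := norm_nonneg _
  have hB0 : (0:ℝ) ≤ ‖(2:ℝ) • x + y‖ := norm_nonneg _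
  have hden : (0:ℝ) < 5 * c ^ 2 := by nlinarith
  rw [div_le_div_iff₀ hden (by norm_num : (0:ℝ) < 5)]
  nlinarith

/-- For `X = ℝ²` with the maximum norm `‖(x₁,x₂)‖ = max {|x₁|, |x₂|}`
(the product norm on `ℝ × ℝ`), one has `Ω(X) = 8/5`. -/
theorem omegaConst_prod_real_sup_norm : OmegaConst (ℝ × ℝ) = 8 / 5 := by
  unfold OmegaConst
  apply le_antisymm
  · exact csSup_le ⟨8/5, omega_mem85⟩ omega_ub
  · exact le_csSup ⟨8/5, omega_ub⟩ omega_mem85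
end

section
/- Let X = ℝ² endowed with the ℓ∞–ℓ₁ norm defined by ‖(x₁,x₂)‖ = |x₁| + |x₂| when x₁x₂ ≤ 0 and ‖(x₁,x₂)‖ = max{|x₁|, |x₂|} when x₁x₂ ≥ 0. Then Ω(X) = 49/40. -/
theorem omega_quotient_le_of_four_thirds_le_norm_add {E : Type*} [SeminormedAddCommGroup E]
    [NormedSpace ℝ E] {x y : E} (hx : ‖x‖ = 1) (hy : ‖y‖ = 1) (h : 4 / 3 ≤ ‖x + y‖) :
    (‖x + (2 : ℝ) • y‖ ^ 2 + ‖(2 : ℝ) • x + y‖ ^ 2) / (5 * ‖x + y‖ ^ 2) ≤ 49 / 40 := by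
  set t := ‖x + y‖
  have hxy : ‖x + (2 : ℝ) • y‖ ≤ t + 1 := by
    calc ‖x + (2 : ℝ) • y‖ = ‖(x + y) + y‖ := by rw [two_smul, add_assoc]
      _ ≤ t + 1 := hy ▸ norm_add_le _ _
  have hyx : ‖(2 : ℝ) • x + y‖ ≤ t + 1 := by
    calc ‖(2 : ℝ) • x + y‖ = ‖(x + y) + x‖ := by rw [two_smul, add_right_comm, add_assoc]
      _ ≤ t + 1 := hx ▸ norm_add_le _ _
  rw [div_le_iff₀ (by positivity)]
  -- `2 (t + 1)² ≤ (49/8) t²` is `(3t - 4)(11t + 4) ≥ 0`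
  nlinarith [mul_nonneg (sub_nonneg.mpr h) (by linarith : (0 : ℝ) ≤ 11 * t + 4),
    pow_le_pow_left₀ (norm_nonneg _) hxy 2, pow_le_pow_left₀ (norm_nonneg _) hyx 2]

noncomputable def hexNorm (a b : ℝ) : ℝ := max |a| (max |b| |a - b|)

lemma hexNorm_eq_abs_add_abs {a b : ℝ} (h : a * b ≤ 0) : hexNorm a b = |a| + |b| := by
  rcases mul_nonpos_iff.mp h with ⟨ha, hb⟩ | ⟨ha, hb⟩ <;> grind [hexNorm]

lemma hexNorm_eq_max_abs {a b : ℝ} (h : 0 ≤ a * b) : hexNorm a b = max |a| |b| := by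
  rcases mul_nonneg_iff.mp h with ⟨ha, hb⟩ | ⟨ha, hb⟩ <;> grind [hexNorm]

lemma abs_add_abs_add_abs_sub (a b : ℝ) : |a| + |b| + |a - b| = 2 * hexNorm a b := by
  rcases le_total 0 a with ha | ha <;> rcases le_total 0 b with hb | hb <;> grind [hexNorm]

lemma abs_add_abs_le_max_abs_add_abs_sub (u v : ℝ) : |u| + |v| ≤ max |u + v| |u - v| := by
  grind

lemma two_mul_hexNorm_add_hexNorm_le (a b c d : ℝ) :
    2 * (hexNorm a b + hexNorm c d) ≤
      3 * max (hexNorm (a + c) (b + d)) (hexNorm (a - c) (b - d)) := by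
  set M := max (hexNorm (a + c) (b + d)) (hexNorm (a - c) (b - d))
  have hM {u v : ℝ} (hu : u ≤ hexNorm (a + c) (b + d)) (hv : v ≤ hexNorm (a - c) (b - d)) :
      max u v ≤ M :=
    max_le_max hu hv
  have h₁ : |a| + |c| ≤ M :=
    (abs_add_abs_le_max_abs_add_abs_sub a c).trans (hM (by simp [hexNorm]) (by simp [hexNorm]))
  have h₂ : |b| + |d| ≤ M :=
    (abs_add_abs_le_max_abs_add_abs_sub b d).trans (hM (by simp [hexNorm]) (by simp [hexNorm]))
  have h₃ : |a - b| + |c - d| ≤ M := by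
    refine (abs_add_abs_le_max_abs_add_abs_sub (a - b) (c - d)).trans (hM ?_ ?_)
    · rw [show a - b + (c - d) = a + c - (b + d) by ring]; simp [hexNorm]
    · rw [show a - b - (c - d) = a - c - (b - d) by ring]; simp [hexNorm]
  linarith [abs_add_abs_add_abs_sub a b, abs_add_abs_add_abs_sub c d]

section CoordinateBasis

variable {X : Type*} [NormedAddCommGroup X] [NormedSpace ℝ X] {e₁ e₂ : X}

theorem four_thirds_le_norm_add_of_norm_add_eq_norm_sub
    (hN : ∀ a b : ℝ, ‖a • e₁ + b • e₂‖ = hexNorm a b)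
    (hspan : ∀ x : X, ∃ a b : ℝ, x = a • e₁ + b • e₂) {x y : X} (hx : ‖x‖ = 1) (hy : ‖y‖ = 1)
    (hxy : ‖x + y‖ = ‖x - y‖) : 4 / 3 ≤ ‖x + y‖ := by
  obtain ⟨a, b, rfl⟩ := hspan x
  obtain ⟨c, d, rfl⟩ := hspan y
  have hadd : ‖a • e₁ + b • e₂ + (c • e₁ + d • e₂)‖ = hexNorm (a + c) (b + d) := by
    rw [← hN]; congr 1; module
  have hsub : ‖a • e₁ + b • e₂ - (c • e₁ + d • e₂)‖ = hexNorm (a - c) (b - d) := by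
    rw [← hN]; congr 1; module
  have key := two_mul_hexNorm_add_hexNorm_le a b c d
  rw [← hadd, ← hsub, ← hxy, max_self, ← hN, ← hN, hx, hy] at key
  linarith

theorem exists_omega_quotient_eq (hN : ∀ a b : ℝ, ‖a • e₁ + b • e₂‖ = hexNorm a b) :
    ∃ x y : X, ‖x‖ = 1 ∧ ‖y‖ = 1 ∧ ‖x + y‖ = ‖x - y‖ ∧
      49 / 40 = (‖x + (2 : ℝ) • y‖ ^ 2 + ‖(2 : ℝ) • x + y‖ ^ 2) / (5 * ‖x + y‖ ^ 2) := by
  set x : X := (2 / 3 : ℝ) • e₁ + (-1 / 3 : ℝ) • e₂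
  set y : X := (-2 / 3 : ℝ) • e₁ + (-1 : ℝ) • e₂
  have hadd : x + y = (0 : ℝ) • e₁ + (-4 / 3 : ℝ) • e₂ := by module
  have hsub : x - y = (4 / 3 : ℝ) • e₁ + (2 / 3 : ℝ) • e₂ := by module
  have hadd₂ : x + (2 : ℝ) • y = (-2 / 3 : ℝ) • e₁ + (-7 / 3 : ℝ) • e₂ := by module
  have h₂add : (2 : ℝ) • x + y = (2 / 3 : ℝ) • e₁ + (-5 / 3 : ℝ) • e₂ := by module
  refine ⟨x, y, ?_⟩
  rw [hadd, hsub, hadd₂, h₂add, hN, hN, hN, hN, hN, hN]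
  norm_num [hexNorm, abs_of_nonneg, abs_of_nonpos]

end CoordinateBasis

/-- Let `X` be `ℝ²` endowed with the `ℓ∞–ℓ₁` norm:
`‖(a,b)‖ = |a| + |b|` if `ab ≤ 0` and `‖(a,b)‖ = max {|a|, |b|}` if `ab ≥ 0`
(formalized as a two-dimensional real normed space with coordinates `e₁, e₂` in
which every vector `a • e₁ + b • e₂` has this norm). Then `Ω(X) = 49/40`. -/
theorem omegaConst_linfty_lone_norm
    {X : Type*} [NormedAddCommGroup X] [NormedSpace ℝ X]
    (e₁ e₂ : X) (hspan : ∀ x : X, ∃ a b : ℝ, x = a • e₁ + b • e₂)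
    (hnorm : ∀ a b : ℝ,
      (a * b ≤ 0 → ‖a • e₁ + b • e₂‖ = |a| + |b|) ∧
      (0 ≤ a * b → ‖a • e₁ + b • e₂‖ = max |a| |b|)) :
    OmegaConst X = 49 / 40 := by
  have hN (a b : ℝ) : ‖a • e₁ + b • e₂‖ = hexNorm a b := by
    rcases le_total (a * b) 0 with h | h
    · rw [(hnorm a b).1 h, hexNorm_eq_abs_add_abs h]
    · rw [(hnorm a b).2 h, hexNorm_eq_max_abs h]
  refine IsGreatest.csSup_eq ⟨exists_omega_quotient_eq hN, ?_⟩
  rintro _ ⟨x, y, hx, hy, hxy, rfl⟩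
  exact omega_quotient_le_of_four_thirds_le_norm_add hx hy
    (four_thirds_le_norm_add_of_norm_add_eq_norm_sub hN hspan hx hy hxy)
end

section
/- Let X be a real Banach space with dim X ≥ 2. If X is not uniformly non-square, then Ω(X) = 8/5. -/
/-- `X` is uniformly non-square if there is `δ ∈ (0,1)` such that for all
`x, y ∈ S_X` either `‖x+y‖/2 ≤ 1−δ` or `‖x−y‖/2 ≤ 1−δ`. -/
def UniformlyNonSquare (X : Type*) [NormedAddCommGroup X] [NormedSpace ℝ X] : Prop :=
  ∃ δ : ℝ, 0 < δ ∧ δ < 1 ∧ ∀ x y : X, ‖x‖ = 1 → ‖y‖ = 1 →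
    ‖x + y‖ / 2 ≤ 1 - δ ∨ ‖x - y‖ / 2 ≤ 1 - δ

/-!
The bound `Ω(X) ≤ 8/5` holds in every normed space: for unit vectors with `‖x + y‖ = ‖x - y‖`
one has `‖x + y‖ ≥ 1`, so both `‖x + 2y‖` and `‖2x + y‖` are at most `‖x + y‖ + 1 ≤ 2‖x + y‖`.

Conversely, if `X` is not uniformly non-square there are unit vectors `u, v` with `‖u + v‖` and
`‖u - v‖` both close to `2`. Moving `v` to `-u` along the normalised segment, the intermediate
value theorem gives a unit `w` with `‖u + w‖ = ‖u - w‖ = s`, and a norming functional of `u - v`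
keeps `s` close to `2` along the way. Then `x = (u + w)/s` and `y = (u - w)/s` are isosceles
orthogonal unit vectors with `x + 2y = (3u - w)/s`, `2x + y = (3u + w)/s`, `x + y = 2u/s`, so their
ratio is `(‖3u - w‖² + ‖3u + w‖²)/20 ≥ (3s - 2)²/10`, which tends to `8/5` as `s → 2`.
-/

open Set

theorem exists_norm_add_eq_norm_sub_of_continuousOn {X : Type*} [SeminormedAddCommGroup X]
    {u : X} {γ : ℝ → X} (hγ : ContinuousOn γ (Icc 0 1)) (h₀ : ‖u - γ 0‖ ≤ ‖u + γ 0‖)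
    (h₁ : ‖u + γ 1‖ ≤ ‖u - γ 1‖) :
    ∃ t ∈ Icc (0 : ℝ) 1, ‖u + γ t‖ = ‖u - γ t‖ := by
  have hf : ContinuousOn (fun t => ‖u + γ t‖ - ‖u - γ t‖) (Icc 0 1) :=
    ((continuousOn_const.add hγ).norm).sub ((continuousOn_const.sub hγ).norm)
  obtain ⟨t, ht, hft⟩ := intermediate_value_Icc' zero_le_one hf
    (show (0 : ℝ) ∈ _ from ⟨by linarith, by linarith⟩)
  exact ⟨t, ht, sub_eq_zero.1 hft⟩

noncomputable def omegaRatio {X : Type*} [NormedAddCommGroup X] [NormedSpace ℝ X] (x y : X) : ℝ :=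
  (‖x + (2 : ℝ) • y‖ ^ 2 + ‖(2 : ℝ) • x + y‖ ^ 2) / (5 * ‖x + y‖ ^ 2)

section

variable {X : Type*} [NormedAddCommGroup X] [NormedSpace ℝ X]

theorem one_le_norm_add_of_norm_add_eq_norm_sub {x y : X} (hx : ‖x‖ = 1)
    (hxy : ‖x + y‖ = ‖x - y‖) : 1 ≤ ‖x + y‖ := by
  have h2x : ‖(2 : ℝ) • x‖ ≤ ‖x + y‖ + ‖x - y‖ :=
    calc ‖(2 : ℝ) • x‖ = ‖(x + y) + (x - y)‖ := by congr 1; module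
      _ ≤ ‖x + y‖ + ‖x - y‖ := norm_add_le _ _
  rw [norm_smul, hx, ← hxy] at h2x
  norm_num at h2x
  linarith

theorem omegaRatio_le {x y : X} (hx : ‖x‖ = 1) (hy : ‖y‖ = 1) (hxy : ‖x + y‖ = ‖x - y‖) :
    omegaRatio x y ≤ 8 / 5 := by
  have hs := one_le_norm_add_of_norm_add_eq_norm_sub hx hxy
  have h₁ : ‖x + (2 : ℝ) • y‖ ≤ 2 * ‖x + y‖ :=
    calc ‖x + (2 : ℝ) • y‖ = ‖(x + y) + y‖ := by congr 1; module
      _ ≤ ‖x + y‖ + ‖y‖ := norm_add_le _ _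
      _ ≤ 2 * ‖x + y‖ := by linarith
  have h₂ : ‖(2 : ℝ) • x + y‖ ≤ 2 * ‖x + y‖ :=
    calc ‖(2 : ℝ) • x + y‖ = ‖(x + y) + x‖ := by congr 1; module
      _ ≤ ‖x + y‖ + ‖x‖ := norm_add_le _ _
      _ ≤ 2 * ‖x + y‖ := by linarith
  rw [omegaRatio, div_le_iff₀ (by positivity)]
  nlinarith [pow_le_pow_left₀ (norm_nonneg _) h₁ 2, pow_le_pow_left₀ (norm_nonneg _) h₂ 2]

theorem omegaRatio_smul {c : ℝ} (hc : c ≠ 0) (x y : X) :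
    omegaRatio (c • x) (c • y) = omegaRatio x y := by
  simp only [omegaRatio, smul_comm (2 : ℝ) c, ← smul_add, norm_smul, mul_pow]
  have : ‖c‖ ^ 2 ≠ 0 := by positivity
  field_simp

theorem omegaRatio_add_sub {u : X} (hu : ‖u‖ = 1) (w : X) :
    omegaRatio (u + w) (u - w) = (‖(3 : ℝ) • u - w‖ ^ 2 + ‖(3 : ℝ) • u + w‖ ^ 2) / 20 := by
  have e₁ : u + w + (2 : ℝ) • (u - w) = (3 : ℝ) • u - w := by module
  have e₂ : (2 : ℝ) • (u + w) + (u - w) = (3 : ℝ) • u + w := by module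
  have e₃ : u + w + (u - w) = (2 : ℝ) • u := by module
  rw [omegaRatio, e₁, e₂, e₃, norm_smul, hu]
  norm_num

theorem exists_omegaRatio_ge {u w : X} (hu : ‖u‖ = 1) (hw : ‖w‖ = 1)
    (huw : ‖u + w‖ = ‖u - w‖) (hs : 2 / 3 ≤ ‖u + w‖) :
    ∃ x y : X, ‖x‖ = 1 ∧ ‖y‖ = 1 ∧ ‖x + y‖ = ‖x - y‖ ∧
      (3 * ‖u + w‖ - 2) ^ 2 / 10 ≤ omegaRatio x y := by
  set s := ‖u + w‖
  have hs₀ : s ≠ 0 := by positivity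
  have h₁ : 3 * s - 2 ≤ ‖(3 : ℝ) • u - w‖ := sub_le_iff_le_add.2 <|
    calc 3 * s = ‖(3 : ℝ) • (u - w)‖ := by rw [norm_smul, ← huw]; norm_num
      _ = ‖((3 : ℝ) • u - w) - (2 : ℝ) • w‖ := by congr 1; module
      _ ≤ ‖(3 : ℝ) • u - w‖ + 2 := by
        refine (norm_sub_le _ _).trans_eq ?_
        rw [norm_smul, hw]; norm_num
  have h₂ : 3 * s - 2 ≤ ‖(3 : ℝ) • u + w‖ := sub_le_iff_le_add.2 <|
    calc 3 * s = ‖(3 : ℝ) • (u + w)‖ := by rw [norm_smul]; norm_num [s]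
      _ = ‖((3 : ℝ) • u + w) + (2 : ℝ) • w‖ := by congr 1; module
      _ ≤ ‖(3 : ℝ) • u + w‖ + 2 := by
        refine (norm_add_le _ _).trans_eq ?_
        rw [norm_smul, hw]; norm_num
  refine ⟨s⁻¹ • (u + w), s⁻¹ • (u - w), ?_, ?_, ?_, ?_⟩
  · rw [norm_smul, norm_inv, norm_norm, inv_mul_cancel₀ hs₀]
  · rw [norm_smul, norm_inv, norm_norm, ← huw, inv_mul_cancel₀ hs₀]
  · have e₁ : u + w + (u - w) = (2 : ℝ) • u := by module
    have e₂ : u + w - (u - w) = (2 : ℝ) • w := by module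
    rw [← smul_add, ← smul_sub, e₁, e₂, norm_smul, norm_smul, norm_smul, norm_smul, hu, hw]
  · rw [omegaRatio_smul (inv_ne_zero hs₀), omegaRatio_add_sub hu]
    nlinarith [pow_le_pow_left₀ (by linarith) h₁ 2, pow_le_pow_left₀ (by linarith) h₂ 2]

theorem ContinuousLinearMap.apply_le_norm_of_norm_le_one {g : X →L[ℝ] ℝ} (hg : ‖g‖ ≤ 1)
    (z : X) : g z ≤ ‖z‖ := by
  simpa using (le_abs_self (g z)).trans (g.le_of_opNorm_le hg z)

theorem two_mul_le_norm_sub_inv_norm_smul {g : X →L[ℝ] ℝ} (hg : ‖g‖ ≤ 1) {a : ℝ} (ha : 0 < a)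
    {u c : X} (hgu : a ≤ g u) (hgc : a ≤ -g c) (hc : ‖c‖ ≤ 1) :
    2 * a ≤ ‖u - ‖c‖⁻¹ • c‖ := by
  have hc₀ : 0 < ‖c‖ := by
    linarith [g.apply_le_norm_of_norm_le_one hg (-c), map_neg g c, norm_neg c]
  have hinv : 1 ≤ ‖c‖⁻¹ := (one_le_inv₀ hc₀).2 hc
  have hval : g (u - ‖c‖⁻¹ • c) = g u + ‖c‖⁻¹ * -g c := by
    simp only [map_sub, map_smul, smul_eq_mul]; ring
  nlinarith [g.apply_le_norm_of_norm_le_one hg (u - ‖c‖⁻¹ • c)]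

theorem exists_norm_add_eq_norm_sub_of_norm_sub_ge {ε : ℝ} (hε : ε < 1) {u v : X}
    (hu : ‖u‖ = 1) (hv : ‖v‖ = 1) (hsub : 2 - ε ≤ ‖u - v‖) (hle : ‖u - v‖ ≤ ‖u + v‖) :
    ∃ w : X, ‖w‖ = 1 ∧ ‖u + w‖ = ‖u - w‖ ∧ 2 - 2 * ε ≤ ‖u - w‖ := by
  obtain ⟨g, hg, hguv⟩ := exists_dual_vector ℝ (u - v) (by rintro h; simp [h] at hsub; linarith)
  have hgu := g.apply_le_norm_of_norm_le_one hg.le u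
  have hgv := g.apply_le_norm_of_norm_le_one hg.le (-v)
  simp only [map_sub, map_neg, norm_neg, hu, hv, RCLike.ofReal_real_eq_id, id] at hguv hgu hgv
  let c : ℝ → X := fun t => (1 - t) • v - t • u
  have hgc : ∀ t ∈ Icc (0 : ℝ) 1, 1 - ε ≤ -g (c t) := by
    rintro t ⟨ht₀, ht₁⟩
    simp only [c, map_sub, map_smul, smul_eq_mul]
    nlinarith
  have hc_pos : ∀ t ∈ Icc (0 : ℝ) 1, 0 < ‖c t‖ := fun t ht => by
    linarith [hgc t ht, g.apply_le_norm_of_norm_le_one hg.le (-c t), map_neg g (c t),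
      norm_neg (c t)]
  have hc_le : ∀ t ∈ Icc (0 : ℝ) 1, ‖c t‖ ≤ 1 := by
    rintro t ⟨ht₀, ht₁⟩
    calc ‖c t‖ ≤ ‖(1 - t) • v‖ + ‖t • u‖ := norm_sub_le _ _
      _ = 1 := by
        rw [norm_smul, norm_smul, hu, hv, Real.norm_of_nonneg ht₀,
          Real.norm_of_nonneg (by linarith)]
        ring
  let γ : ℝ → X := fun t => ‖c t‖⁻¹ • c t
  have hγ : ContinuousOn γ (Icc 0 1) :=
    (ContinuousOn.inv₀ (by fun_prop) fun t ht => (hc_pos t ht).ne').smul (by fun_prop)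
  have hγ₀ : γ 0 = v := by simp [γ, c, hv]
  have hγ₁ : γ 1 = -u := by simp [γ, c, hu]
  obtain ⟨t, ht, hiso⟩ := exists_norm_add_eq_norm_sub_of_continuousOn hγ
    (by rwa [hγ₀]) (by simp [hγ₁, hu, ← two_smul ℝ u, norm_smul])
  refine ⟨γ t, ?_, hiso, ?_⟩
  · simp only [γ, norm_smul, norm_inv, norm_norm, inv_mul_cancel₀ (hc_pos t ht).ne']
  · linarith [two_mul_le_norm_sub_inv_norm_smul hg.le (by linarith) (u := u) (by linarith)
      (hgc t ht) (hc_le t ht)]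

theorem exists_near_square_of_not_uniformlyNonSquare (h : ¬ UniformlyNonSquare X) {ε : ℝ}
    (hε : 0 < ε) : ∃ u v : X, ‖u‖ = 1 ∧ ‖v‖ = 1 ∧ 2 - ε ≤ ‖u + v‖ ∧ 2 - ε ≤ ‖u - v‖ := by
  simp only [UniformlyNonSquare, not_exists, not_and, not_forall, not_or, not_le] at h
  have hδ := min_le_left (ε / 2) (1 / 2)
  obtain ⟨u, v, hu, hv, hadd, hsub⟩ :=
    h (min (ε / 2) (1 / 2)) (by positivity) (by linarith [min_le_right (ε / 2) (1 / 2)])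
  exact ⟨u, v, hu, hv, by linarith, by linarith⟩

theorem exists_omegaRatio_gt (h : ¬ UniformlyNonSquare X) {r : ℝ} (hr : r < 8 / 5) :
    ∃ x y : X, ‖x‖ = 1 ∧ ‖y‖ = 1 ∧ ‖x + y‖ = ‖x - y‖ ∧ r < omegaRatio x y := by
  set ε := min (1 / 6) ((8 / 5 - r) / 6)
  have hε₀ : 0 < ε := lt_min (by norm_num) (by linarith)
  have hε₁ : ε ≤ 1 / 6 := min_le_left _ _
  have hεr : ε ≤ (8 / 5 - r) / 6 := min_le_right _ _
  obtain ⟨u, v, hu, hv, hadd, hsub⟩ := exists_near_square_of_not_uniformlyNonSquare h hε₀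
  obtain ⟨w, hw, huw, hfar⟩ : ∃ w : X, ‖w‖ = 1 ∧ ‖u + w‖ = ‖u - w‖ ∧ 2 - 2 * ε ≤ ‖u - w‖ := by
    rcases le_total ‖u - v‖ ‖u + v‖ with hle | hle
    · exact exists_norm_add_eq_norm_sub_of_norm_sub_ge (by linarith) hu hv hsub hle
    · refine exists_norm_add_eq_norm_sub_of_norm_sub_ge (v := -v) (by linarith) hu
        (by rwa [norm_neg]) ?_ ?_ <;> simpa only [sub_neg_eq_add, ← sub_eq_add_neg]
  obtain ⟨x, y, hx, hy, hxy, hge⟩ := exists_omegaRatio_ge hu hw huw (by linarith)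
  refine ⟨x, y, hx, hy, hxy, lt_of_lt_of_le ?_ hge⟩
  rw [huw]
  nlinarith

end

theorem omegaConst_eq_of_not_uniformlyNonSquare_general
    {X : Type*} [NormedAddCommGroup X] [NormedSpace ℝ X]
    (h : ¬ UniformlyNonSquare X) :
    OmegaConst X = 8 / 5 := by
  obtain ⟨x, y, hx, hy, hxy, -⟩ := exists_omegaRatio_gt h (r := 0) (by norm_num)
  refine csSup_eq_of_forall_le_of_forall_lt_exists_gt ⟨_, x, y, hx, hy, hxy, rfl⟩ ?_ ?_
  · rintro _ ⟨x, y, hx, hy, hxy, rfl⟩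
    exact omegaRatio_le hx hy hxy
  · intro r hr
    obtain ⟨x, y, hx, hy, hxy, hlt⟩ := exists_omegaRatio_gt h hr
    exact ⟨_, ⟨x, y, hx, hy, hxy, rfl⟩, hlt⟩

/-- If a real Banach space `X` with `dim X ≥ 2` is not uniformly non-square,
then `Ω(X) = 8/5`. -/
theorem omegaConst_eq_of_not_uniformlyNonSquare
    {X : Type*} [NormedAddCommGroup X] [NormedSpace ℝ X] [CompleteSpace X]
    (hdim : 2 ≤ Module.rank ℝ X)
    (h : ¬ UniformlyNonSquare X) :
    OmegaConst X = 8 / 5 :=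
  omegaConst_eq_of_not_uniformlyNonSquare_general h
end

section
/- Let X be a finite-dimensional real Banach space with dim X ≥ 2. If Ω(X) = 8/5, then X is not uniformly non-square. -/
/-- If `X` is a finite-dimensional real Banach space with `dim X ≥ 2` and
`Ω(X) = 8/5`, then `X` is not uniformly non-square. -/
theorem not_uniformlyNonSquare_of_omegaConst_eq
    {X : Type*} [NormedAddCommGroup X] [NormedSpace ℝ X] [FiniteDimensional ℝ X]
    (hdim : 2 ≤ Module.finrank ℝ X)
    (h : OmegaConst X = 8 / 5) :
    ¬ UniformlyNonSquare X := by
  rintro ⟨δ, hδ0, hδ1, hns⟩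
  rw [OmegaConst] at h
  set S : Set ℝ := { r : ℝ | ∃ x y : X, ‖x‖ = 1 ∧ ‖y‖ = 1 ∧ ‖x + y‖ = ‖x - y‖ ∧
    r = (‖x + (2 : ℝ) • y‖ ^ 2 + ‖(2 : ℝ) • x + y‖ ^ 2) / (5 * ‖x + y‖ ^ 2) } with hSdef
  by_cases hS : S.Nonempty
  · have hub : ∀ r ∈ S, r ≤ (2 / 5) * (2 - δ) ^ 2 := by
      rintro r ⟨x, y, hx, hy, hiso, hr⟩
      set t : ℝ := ‖x + y‖ with htdef
      -- t ≥ 1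
      have h2x : ‖x + x‖ = 2 := by
        rw [← two_smul ℝ x, norm_smul]
        simp [hx]
      have hxx : x + x = (x + y) + (x - y) := by abel
      have ht1 : 1 ≤ t := by
        have := norm_add_le (x + y) (x - y)
        rw [← hxx, h2x, ← hiso] at this
        linarith
      have ht0 : (0 : ℝ) < t := by linarith
      -- apply uniform non-squareness to normalized u, v
      have hu : ‖t⁻¹ • (x + y)‖ = 1 := by
        rw [norm_smul, Real.norm_eq_abs, abs_of_pos (inv_pos.mpr ht0), ← htdef]
        field_simp
      have hv : ‖t⁻¹ • (x - y)‖ = 1 := by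
        rw [norm_smul, Real.norm_eq_abs, abs_of_pos (inv_pos.mpr ht0), ← hiso]
        field_simp
      have haddn : ‖t⁻¹ • (x + y) + t⁻¹ • (x - y)‖ = 2 / t := by
        rw [← smul_add, ← hxx, norm_smul, Real.norm_eq_abs,
          abs_of_pos (inv_pos.mpr ht0), h2x]
        ring
      have hsubn : ‖t⁻¹ • (x + y) - t⁻¹ • (x - y)‖ = 2 / t := by
        have hyy : (x + y) - (x - y) = y + y := by abel
        have h2y : ‖y + y‖ = 2 := by
          rw [← two_smul ℝ y, norm_smul]; simp [hy]
        rw [← smul_sub, hyy, norm_smul, Real.norm_eq_abs,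
          abs_of_pos (inv_pos.mpr ht0), h2y]
        ring
      have hkey : 1 ≤ (1 - δ) * t := by
        have hinv : 1 / t ≤ 1 - δ := by
          have heq : 2 / t / 2 = 1 / t := by ring
          rcases hns _ _ hu hv with hc | hc
          · rw [haddn, heq] at hc; exact hc
          · rw [hsubn, heq] at hc; exact hc
        have := mul_le_mul_of_nonneg_right hinv (le_of_lt ht0)
        rw [div_mul_cancel₀ 1 (ne_of_gt ht0)] at this
        exact this
      -- norm bounds
      have ha : ‖x + (2 : ℝ) • y‖ ≤ t + 1 := by
        have : x + (2 : ℝ) • y = (x + y) + y := by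
          rw [two_smul]; abel
        rw [this]
        calc ‖(x + y) + y‖ ≤ ‖x + y‖ + ‖y‖ := norm_add_le _ _
          _ = t + 1 := by rw [hy]
      have hb : ‖(2 : ℝ) • x + y‖ ≤ t + 1 := by
        have : (2 : ℝ) • x + y = (x + y) + x := by
          rw [two_smul]; abel
        rw [this]
        calc ‖(x + y) + x‖ ≤ ‖x + y‖ + ‖x‖ := norm_add_le _ _
          _ = t + 1 := by rw [hx]
      have ha0 : (0 : ℝ) ≤ ‖x + (2 : ℝ) • y‖ := norm_nonneg _
      have hb0 : (0 : ℝ) ≤ ‖(2 : ℝ) • x + y‖ := norm_nonneg _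
      have hT : t + 1 ≤ (2 - δ) * t := by
        have : (2 - δ) * t = t + (1 - δ) * t := by ring
        linarith
      have ha' : ‖x + (2 : ℝ) • y‖ ≤ (2 - δ) * t := le_trans ha hT
      have hb' : ‖(2 : ℝ) • x + y‖ ≤ (2 - δ) * t := le_trans hb hT
      have ha2 : ‖x + (2 : ℝ) • y‖ ^ 2 ≤ ((2 - δ) * t) ^ 2 := pow_le_pow_left₀ ha0 ha' 2
      have hb2 : ‖(2 : ℝ) • x + y‖ ^ 2 ≤ ((2 - δ) * t) ^ 2 := pow_le_pow_left₀ hb0 hb' 2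
      rw [hr, div_le_iff₀ (by positivity)]
      have hrhs : (2 / 5) * (2 - δ) ^ 2 * (5 * t ^ 2) = 2 * ((2 - δ) * t) ^ 2 := by ring
      rw [hrhs]
      linarith
    have hle : sSup S ≤ (2 / 5) * (2 - δ) ^ 2 := csSup_le hS hub
    rw [h] at hle
    nlinarith
  · rw [Set.not_nonempty_iff_eq_empty] at hS
    rw [hS, Real.sSup_empty] at h
    norm_num at h
end

section
/- Let X be a real Banach space with dim X ≥ 2. Then Ω(X) ≤ 2/5 + J(X)²/10 + 2J(X)/5, where J(X) is the James constant of X. -/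
/-- The James constant `J(X) = sup{ min{‖x+y‖, ‖x−y‖} : x, y ∈ S_X }`. -/
noncomputable def JamesConst (X : Type*) [NormedAddCommGroup X] [NormedSpace ℝ X] : ℝ :=
  sSup { r : ℝ | ∃ x y : X, ‖x‖ = 1 ∧ ‖y‖ = 1 ∧ r = min ‖x + y‖ ‖x - y‖ }

/-- For a real Banach space `X` with `dim X ≥ 2`,
`Ω(X) ≤ 2/5 + J(X)²/10 + 2·J(X)/5`. -/
theorem omegaConst_le_james_upper_bound
    {X : Type*} [NormedAddCommGroup X] [NormedSpace ℝ X] [CompleteSpace X]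
    (hdim : 2 ≤ Module.rank ℝ X) :
    OmegaConst X ≤ 2 / 5 + JamesConst X ^ 2 / 10 + 2 * JamesConst X / 5 := by
  have hnt : Nontrivial X := by
    exact rank_pos_iff_nontrivial.mp (lt_of_lt_of_le (by norm_num) hdim)
  -- a unit vector
  obtain ⟨x0, hx0⟩ := exists_ne (0 : X)
  set u : X := ‖x0‖⁻¹ • x0 with hu_def
  have hu : ‖u‖ = 1 := by
    rw [hu_def, norm_smul, norm_inv, norm_norm, inv_mul_cancel₀ (norm_ne_zero_iff.mpr hx0)]
  -- James set is bounded above by 2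
  have hbdd : BddAbove { r : ℝ | ∃ x y : X, ‖x‖ = 1 ∧ ‖y‖ = 1 ∧ r = min ‖x + y‖ ‖x - y‖ } := by
    refine ⟨2, fun r hr => ?_⟩
    obtain ⟨x, y, hx, hy, hr⟩ := hr
    have : ‖x + y‖ ≤ 2 := by
      calc ‖x + y‖ ≤ ‖x‖ + ‖y‖ := norm_add_le _ _
        _ = 2 := by rw [hx, hy]; norm_num
    calc r ≤ ‖x + y‖ := hr ▸ min_le_left _ _
      _ ≤ 2 := this
  have hJ0 : 0 ≤ JamesConst X := by
    apply le_csSup hbdd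
    refine ⟨u, u, hu, hu, ?_⟩
    rw [sub_self, norm_zero]
    exact (min_eq_right (norm_nonneg _)).symm
  set J := JamesConst X
  apply Real.sSup_le
  · rintro r ⟨x, y, hx, hy, hI, hr⟩
    set t := ‖x + y‖ with ht_def
    have ht0 : 0 < t := by
      by_contra hle
      push_neg at hle
      have h0 : t = 0 := le_antisymm hle (norm_nonneg _)
      have hxy : x + y = 0 := norm_eq_zero.mp h0
      have hyx : y = -x := by rw [eq_neg_iff_add_eq_zero, add_comm]; exact hxy
      have h2 : ‖x - y‖ = 2 := by
        rw [hyx, sub_neg_eq_add, show x + x = (2:ℝ) • x by module, norm_smul, hx]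
        norm_num
      rw [← hI, h0] at h2
      norm_num at h2
    -- J ≥ 2/t
    have hmem : 2 / t ∈ { r : ℝ | ∃ x y : X, ‖x‖ = 1 ∧ ‖y‖ = 1 ∧ r = min ‖x + y‖ ‖x - y‖ } := by
      refine ⟨t⁻¹ • (x + y), t⁻¹ • (x - y), ?_, ?_, ?_⟩
      · rw [norm_smul, norm_inv, Real.norm_eq_abs, abs_of_pos ht0, ← ht_def,
          inv_mul_cancel₀ ht0.ne']
      · rw [norm_smul, norm_inv, Real.norm_eq_abs, abs_of_pos ht0, ← hI,
          inv_mul_cancel₀ ht0.ne']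
      · have h1 : t⁻¹ • (x + y) + t⁻¹ • (x - y) = t⁻¹ • ((2:ℝ) • x) := by module
        have h2 : t⁻¹ • (x + y) - t⁻¹ • (x - y) = t⁻¹ • ((2:ℝ) • y) := by module
        rw [h1, h2, norm_smul, norm_smul, norm_smul, norm_smul, hx, hy, min_self,
          Real.norm_eq_abs, Real.norm_eq_abs, abs_of_pos (inv_pos.mpr ht0), abs_two]
        field_simp
    have hJt : 2 / t ≤ J := le_csSup hbdd hmem
    have hJt' : 2 ≤ t * J := by
      rw [div_le_iff₀ ht0] at hJt
      linarith [hJt]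
    -- numerator bounds
    have ha : ‖x + (2:ℝ) • y‖ ≤ t + 1 := by
      have : x + (2:ℝ) • y = (x + y) + y := by module
      rw [this]
      calc ‖(x + y) + y‖ ≤ ‖x + y‖ + ‖y‖ := norm_add_le _ _
        _ = t + 1 := by rw [← ht_def, hy]
    have hb : ‖(2:ℝ) • x + y‖ ≤ t + 1 := by
      have : (2:ℝ) • x + y = (x + y) + x := by module
      rw [this]
      calc ‖(x + y) + x‖ ≤ ‖x + y‖ + ‖x‖ := norm_add_le _ _
        _ = t + 1 := by rw [← ht_def, hx]
    have ha2 : ‖x + (2:ℝ) • y‖ ^ 2 ≤ (t + 1) ^ 2 := by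
      apply pow_le_pow_left₀ (norm_nonneg _) ha
    have hb2 : ‖(2:ℝ) • x + y‖ ^ 2 ≤ (t + 1) ^ 2 := by
      apply pow_le_pow_left₀ (norm_nonneg _) hb
    rw [hr, div_le_iff₀ (by positivity : (0:ℝ) < 5 * t ^ 2)]
    have key : 2 * (t + 1) ≤ t * (J + 2) := by nlinarith
    have key2 : (2 * (t + 1)) ^ 2 ≤ (t * (J + 2)) ^ 2 :=
      pow_le_pow_left₀ (by positivity) key 2
    nlinarith [key2, ha2, hb2]
  · positivity
end

section
/- Let X be a symmetric Minkowski plane with pair of axes {e₁, e₂}. Then for all x, y ∈ S_X with x = α e₁ + β e₂, one has x ⊥_I y if and only if y = −β e₁ + α e₂ or y = −(−β e₁ + α e₂) = β e₁ − α e₂. -/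
lemma iso_uniq_core {X : Type*} [NormedAddCommGroup X] [NormedSpace ℝ X]
    (x y z : X) (hx : ‖x‖ = 1) (hy : ‖y‖ = 1) (hz : ‖z‖ = 1)
    (hxy : ‖x + y‖ = ‖x - y‖) (hxz : ‖x + z‖ = ‖x - z‖)
    (a b : ℝ) (ha : 0 < a) (hb : 0 < b) (hzc : z = b • x + a • y) : False := by
  set r := ‖x - y‖ with hr
  have hab1 : 1 ≤ a + b := by
    have h := norm_add_le (b • x) (a • y)
    rw [← hzc, hz, norm_smul, norm_smul, hx, hy, Real.norm_eq_abs, Real.norm_eq_abs,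
      abs_of_pos ha, abs_of_pos hb] at h
    linarith
  have hba1 : a ≤ 1 + b := by
    have hid : a • y = z - b • x := by rw [hzc]; module
    have h := norm_sub_le z (b • x)
    rw [← hid, hz, norm_smul, norm_smul, hx, hy, Real.norm_eq_abs, Real.norm_eq_abs,
      abs_of_pos ha, abs_of_pos hb] at h
    linarith
  -- K1 : a + b - 1 ≤ b * r
  have hK1 : a + b - 1 ≤ b * r := by
    have hid : z = (a+b) • y - b • (y - x) := by rw [hzc]; module
    have h := norm_sub_norm_le ((a+b) • y) (b • (y - x))
    rw [← hid, hz, norm_smul, norm_smul, hy, Real.norm_eq_abs, Real.norm_eq_abs,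
      abs_of_pos (by linarith : (0:ℝ) < a + b), abs_of_pos hb, norm_sub_rev, ← hr] at h
    linarith
  -- K2 : (a+b) * ‖x - z‖ ≤ a * r + (a + b - 1)
  have hK2 : (a + b) * ‖x - z‖ ≤ a * r + (a + b - 1) := by
    have hid : (a+b) • (x - z) = a • (x - y) - (a + b - 1) • z := by rw [hzc]; module
    have h := norm_sub_le (a • (x - y)) ((a + b - 1) • z)
    rw [← hid, norm_smul, norm_smul, norm_smul, hz, Real.norm_eq_abs, Real.norm_eq_abs,
      Real.norm_eq_abs, abs_of_pos ha, abs_of_pos (by linarith : (0:ℝ) < a + b),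
      abs_of_nonneg (by linarith : (0:ℝ) ≤ a + b - 1), ← hr] at h
    linarith
  have hzr : ‖x - z‖ ≤ r := by nlinarith [hK1, hK2]
  -- K3 : 1 + b - a ≤ b * ‖x + z‖
  have hK3 : 1 + b - a ≤ b * ‖x + z‖ := by
    have hid : a • y = (1+b) • z - b • (z + x) := by rw [hzc]; module
    have h := norm_sub_norm_le ((1+b) • z) (b • (z + x))
    rw [← hid, norm_smul, norm_smul, norm_smul, hz, hy, Real.norm_eq_abs, Real.norm_eq_abs,
      Real.norm_eq_abs, abs_of_pos ha, abs_of_pos (by linarith : (0:ℝ) < 1 + b),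
      abs_of_pos hb, add_comm z x] at h
    linarith
  -- K4 : (1+b) * ‖x + y‖ ≤ ‖x + z‖ + (1 + b - a)
  have hK4 : (1 + b) * ‖x + y‖ ≤ ‖x + z‖ + (1 + b - a) := by
    have hid : (1+b) • (x + y) = (x + z) + (1 + b - a) • y := by rw [hzc]; module
    have h := norm_add_le (x + z) ((1 + b - a) • y)
    rw [← hid, norm_smul, norm_smul, hy, Real.norm_eq_abs, Real.norm_eq_abs,
      abs_of_pos (by linarith : (0:ℝ) < 1 + b),
      abs_of_nonneg (by linarith : (0:ℝ) ≤ 1 + b - a)] at h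
    linarith
  have hry : ‖x + y‖ = r := hxy
  have hrz : r ≤ ‖x + z‖ := by nlinarith [hK3, hK4]
  have hxzr : ‖x + z‖ = r := le_antisymm (hxz ▸ hzr) hrz
  have hxz2 : ‖x - z‖ = r := by rw [← hxz, hxzr]
  have hE1 : a + b - 1 = b * r := by
    rw [hxz2] at hK2; nlinarith
  have hE2 : 1 + b - a = b * r := by
    rw [hxzr, hry] at hK4; nlinarith
  have ha1 : a = 1 := by linarith
  have hr1 : r = 1 := by
    have : b = b * r := by linarith
    nlinarith
  -- final contradiction
  have hid : (x + z) - (y - x) = (2 + b) • x := by rw [hzc, ha1]; module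
  have h := norm_sub_le (x + z) (y - x)
  rw [hid, norm_smul, hx, Real.norm_eq_abs, abs_of_pos (by linarith : (0:ℝ) < 2 + b),
    hxzr, hr1, norm_sub_rev, ← hr, hr1] at h
  linarith



lemma iso_uniq {X : Type*} [NormedAddCommGroup X] [NormedSpace ℝ X]
    (x y z : X) (hx : ‖x‖ = 1) (hy : ‖y‖ = 1) (hz : ‖z‖ = 1)
    (hxy : ‖x + y‖ = ‖x - y‖) (hxz : ‖x + z‖ = ‖x - z‖)
    (a b : ℝ) (hzc : z = b • x + a • y) : z = y ∨ z = -y := by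
  have hyn : ‖x + -y‖ = ‖x - -y‖ := by
    rw [← sub_eq_add_neg, sub_neg_eq_add]; exact hxy.symm
  have hzn : ‖x + -z‖ = ‖x - -z‖ := by
    rw [← sub_eq_add_neg, sub_neg_eq_add]; exact hxz.symm
  rcases lt_trichotomy a 0 with haneg | ha0 | hapos
  · rcases lt_trichotomy b 0 with hbneg | hb0 | hbpos
    · exact absurd (iso_uniq_core x y (-z) hx hy (by rw [norm_neg]; exact hz) hxy hzn
        (-a) (-b) (by linarith) (by linarith) (by rw [hzc]; module)) not_false
    · -- b = 0 : z = a • y, a < 0 so a = -1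
      subst hb0
      have : ‖z‖ = |a| := by rw [hzc, zero_smul, zero_add, norm_smul, hy, Real.norm_eq_abs, mul_one]
      have ha1 : a = -1 := by
        rw [hz] at this
        rcases abs_cases a with h | h <;> linarith [h.1, h.2]
      right
      rw [hzc, ha1, zero_smul, zero_add, neg_one_smul]
    · exact absurd (iso_uniq_core x (-y) z hx (by rw [norm_neg]; exact hy) hz hyn hxz
        (-a) b (by linarith) hbpos (by rw [hzc]; module)) not_false
  · -- a = 0 : z = ± x, contradiction with hxz
    subst ha0
    have : ‖z‖ = |b| := by rw [hzc, zero_smul, add_zero, norm_smul, hx, Real.norm_eq_abs, mul_one]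
    rw [hz] at this
    have hb1 : b = 1 ∨ b = -1 := by
      rcases abs_cases b with h | h
      · left; linarith [h.1]
      · right; linarith [h.1]
    exfalso
    rcases hb1 with hb1 | hb1
    · rw [hzc, hb1, zero_smul, add_zero, one_smul] at hxz
      have h2 : ‖x + x‖ = 2 := by
        rw [show x + x = (2:ℝ) • x by module, norm_smul, hx, Real.norm_eq_abs]
        norm_num
      rw [sub_self, norm_zero, h2] at hxz
      norm_num at hxz
    · rw [hzc, hb1, zero_smul, add_zero, neg_one_smul] at hxz
      have h2 : ‖x - -x‖ = 2 := by
        rw [show x - -x = (2:ℝ) • x by module, norm_smul, hx, Real.norm_eq_abs]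
        norm_num
      rw [add_neg_cancel, norm_zero, h2] at hxz
      norm_num at hxz
  · rcases lt_trichotomy b 0 with hbneg | hb0 | hbpos
    · exact absurd (iso_uniq_core x (-y) (-z) hx (by rw [norm_neg]; exact hy)
        (by rw [norm_neg]; exact hz) hyn hzn a (-b) hapos (by linarith)
        (by rw [hzc]; module)) not_false
    · subst hb0
      have : ‖z‖ = |a| := by rw [hzc, zero_smul, zero_add, norm_smul, hy, Real.norm_eq_abs, mul_one]
      have ha1 : a = 1 := by
        rw [hz] at this
        rcases abs_cases a with h | h <;> linarith [h.1, h.2]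
      left
      rw [hzc, ha1, zero_smul, zero_add, one_smul]
    · exact absurd (iso_uniq_core x y z hx hy hz hxy hxz a b hapos hbpos hzc) not_false


section
variable {X : Type*} [NormedAddCommGroup X] [NormedSpace ℝ X]

lemma norm_swap (e₁ e₂ : X) (he₁ : ‖e₁‖ = 1) (he₂ : ‖e₂‖ = 1)
    (hsym : ∀ t : ℝ, ‖e₁ + t • e₂‖ = ‖e₁ - t • e₂‖ ∧
      ‖e₁ - t • e₂‖ = ‖e₂ + t • e₁‖ ∧ ‖e₂ + t • e₁‖ = ‖e₂ - t • e₁‖)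
    (a b : ℝ) : ‖a • e₁ + b • e₂‖ = ‖b • e₁ + a • e₂‖ := by
  rcases eq_or_ne a 0 with ha | ha
  · subst ha
    simp [norm_smul, he₁, he₂]
  · have h1 : a • e₁ + b • e₂ = a • (e₁ + (b/a) • e₂) := by
      rw [smul_add, smul_smul, mul_div_cancel₀ _ ha]
    have h2 : b • e₁ + a • e₂ = a • (e₂ + (b/a) • e₁) := by
      rw [smul_add, smul_smul, mul_div_cancel₀ _ ha, add_comm]
    rw [h1, h2, norm_smul, norm_smul]
    congr 1
    rw [(hsym (b/a)).1, (hsym (b/a)).2.1]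

lemma norm_negsnd (e₁ e₂ : X)
    (hsym : ∀ t : ℝ, ‖e₁ + t • e₂‖ = ‖e₁ - t • e₂‖ ∧
      ‖e₁ - t • e₂‖ = ‖e₂ + t • e₁‖ ∧ ‖e₂ + t • e₁‖ = ‖e₂ - t • e₁‖)
    (a b : ℝ) : ‖a • e₁ + b • e₂‖ = ‖a • e₁ - b • e₂‖ := by
  rcases eq_or_ne a 0 with ha | ha
  · subst ha
    simp
  · have h1 : a • e₁ + b • e₂ = a • (e₁ + (b/a) • e₂) := by
      rw [smul_add, smul_smul, mul_div_cancel₀ _ ha]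
    have h2 : a • e₁ - b • e₂ = a • (e₁ - (b/a) • e₂) := by
      rw [smul_sub, smul_smul, mul_div_cancel₀ _ ha]
    rw [h1, h2, norm_smul, norm_smul]
    congr 1
    exact (hsym (b/a)).1

end



/-- Let `X` be a symmetric Minkowski plane with pair of axes `{e₁, e₂}`:
a two-dimensional real normed space with unit vectors `e₁, e₂` such that
`‖e₁ + t e₂‖ = ‖e₁ − t e₂‖ = ‖e₂ + t e₁‖ = ‖e₂ − t e₁‖` for all real `t`.
Then for all `x, y ∈ S_X` with `x = α e₁ + β e₂`, one has `x ⊥_I y`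
(i.e. `‖x+y‖ = ‖x−y‖`) if and only if `y = −β e₁ + α e₂` or `y = β e₁ − α e₂`. -/
theorem isosceles_orthogonal_iff_symmetric_minkowski
    {X : Type*} [NormedAddCommGroup X] [NormedSpace ℝ X]
    (hdim : Module.finrank ℝ X = 2)
    (e₁ e₂ : X) (he₁ : ‖e₁‖ = 1) (he₂ : ‖e₂‖ = 1)
    (hsym : ∀ t : ℝ, ‖e₁ + t • e₂‖ = ‖e₁ - t • e₂‖ ∧
      ‖e₁ - t • e₂‖ = ‖e₂ + t • e₁‖ ∧ ‖e₂ + t • e₁‖ = ‖e₂ - t • e₁‖)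
    (x y : X) (hx : ‖x‖ = 1) (hy : ‖y‖ = 1)
    (α β : ℝ) (hxc : x = α • e₁ + β • e₂) :
    ‖x + y‖ = ‖x - y‖ ↔
      (y = -β • e₁ + α • e₂ ∨ y = β • e₁ - α • e₂) := by
  set y₀ : X := -β • e₁ + α • e₂ with hy₀def
  -- the key norm computation
  have hkey : ∀ γ δ : ℝ, ‖(γ - δ) • e₁ + (γ + δ) • e₂‖ = ‖(γ + δ) • e₁ + (δ - γ) • e₂‖ := by
    intro γ δ
    calc ‖(γ - δ) • e₁ + (γ + δ) • e₂‖
        = ‖(γ - δ) • e₁ - (γ + δ) • e₂‖ := norm_negsnd e₁ e₂ hsym _ _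
      _ = ‖(δ - γ) • e₁ + (γ + δ) • e₂‖ := by
          rw [← norm_neg ((γ - δ) • e₁ - (γ + δ) • e₂)]
          congr 1
          module
      _ = ‖(γ + δ) • e₁ + (δ - γ) • e₂‖ := norm_swap e₁ e₂ he₁ he₂ hsym _ _
  have hsum : x + y₀ = (α - β) • e₁ + (α + β) • e₂ := by rw [hxc, hy₀def]; module
  have hdiff : x - y₀ = (α + β) • e₁ + (β - α) • e₂ := by rw [hxc, hy₀def]; module
  have hperp : ‖x + y₀‖ = ‖x - y₀‖ := by rw [hsum, hdiff]; exact hkey α β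
  have hny₀ : ‖y₀‖ = 1 := by
    calc ‖y₀‖ = ‖(-β) • e₁ + α • e₂‖ := by rw [hy₀def]
      _ = ‖α • e₁ + (-β) • e₂‖ := norm_swap e₁ e₂ he₁ he₂ hsym _ _
      _ = ‖α • e₁ - (-β) • e₂‖ := norm_negsnd e₁ e₂ hsym _ _
      _ = ‖α • e₁ + β • e₂‖ := by congr 1; module
      _ = 1 := by rw [← hxc, hx]
  constructor
  · intro h
    -- linear independence of x, y₀
    have hli : LinearIndependent ℝ ![x, y₀] := by
      rw [linearIndependent_fin2]
      constructor
      · show y₀ ≠ 0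
        intro h0
        rw [h0, norm_zero] at hny₀
        norm_num at hny₀
      · intro c hc
        simp only [Matrix.cons_val_one, Matrix.head_cons, Matrix.cons_val_zero] at hc
        have h1 : ‖x + y₀‖ = |c + 1| := by
          rw [← hc, show c • y₀ + y₀ = (c+1) • y₀ by module, norm_smul, hny₀,
            Real.norm_eq_abs, mul_one]
        have h2 : ‖x - y₀‖ = |c - 1| := by
          rw [← hc, show c • y₀ - y₀ = (c-1) • y₀ by module, norm_smul, hny₀,
            Real.norm_eq_abs, mul_one]
        have h3 : |c + 1| = |c - 1| := by rw [← h1, ← h2, hperp]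
        have hc0 : c = 0 := by
          rcases abs_eq_abs.1 h3 with h4 | h4 <;> linarith
        rw [hc0, zero_smul] at hc
        rw [← hc, norm_zero] at hx
        norm_num at hx
    have hcard : Fintype.card (Fin 2) = Module.finrank ℝ X := by simp [hdim]
    let B := basisOfLinearIndependentOfCardEqFinrank hli hcard
    have hB : ∀ i, B i = ![x, y₀] i := by
      intro i
      rw [show B = basisOfLinearIndependentOfCardEqFinrank hli hcard from rfl,
        coe_basisOfLinearIndependentOfCardEqFinrank]
    have hrep := B.sum_repr y
    rw [Fin.sum_univ_two, hB 0, hB 1] at hrep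
    simp only [Matrix.cons_val_zero, Matrix.cons_val_one, Matrix.head_cons] at hrep
    have := iso_uniq x y₀ y hx hny₀ hy hperp h (B.repr y 1) (B.repr y 0) hrep.symm
    rcases this with h1 | h1
    · left; rw [h1]
    · right; rw [h1, hy₀def]; module
  · intro h
    rcases h with h1 | h1
    · rw [h1]; exact hperp
    · have h2 : y = -y₀ := by rw [h1, hy₀def]; module
      rw [h2, ← sub_eq_add_neg, sub_neg_eq_add]
      exact hperp.symm
end

section
/- Let X be a real normed linear space with dim X ≥ 2. If for all x, y ∈ S_X there exist nonzero real numbers α, β such that ‖αx + βy‖² + ‖αx − βy‖² ≤ 2(α² + β²), then the norm of X is induced by an inner product. -/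
/-!
Restricted to the span of two independent vectors `x, y`, the function
`q (s, t) = ‖s • x + t • y‖ ^ 2` is continuous, positive and 2-homogeneous on `ℝ²`. Among the
positive semidefinite quadratic forms `B ≤ q`, take one of maximal determinant (the Löwner ellipse
of the unit ball of `q`). Maximality forces `q = B` at two independent points: otherwise a small
perturbation of `B` stays below `q` and has larger determinant.

Then the zero set of `r = q - B ≥ 0` is all of `ℝ²`. Otherwise, on a segment between two zeros
there is a gap `(a, b)` free of zeros with zeros at its ends `u`, `v`. Since `q = B` at `u` and `v`
and `B` satisfies the parallelogram law, the hypothesis at `u, v` gives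
`r (γ u + δ v) + r (γ u - δ v) ≤ 0` for some `γ, δ ≠ 0`, hence a zero `|γ| u + |δ| v` inside the
gap. So `q = B` obeys the parallelogram law.
-/

open Filter Metric Set Topology

/-- `quadForm (a, b, c)` is the quadratic form `(s, t) ↦ a s² + 2 b s t + c t²` on `ℝ²`. -/
def quadForm (B : ℝ × ℝ × ℝ) (p : ℝ × ℝ) : ℝ :=
  B.1 * p.1 ^ 2 + 2 * B.2.1 * p.1 * p.2 + B.2.2 * p.2 ^ 2

def quadDet (B : ℝ × ℝ × ℝ) : ℝ := B.1 * B.2.2 - B.2.1 ^ 2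

def quadMixedDet (B M : ℝ × ℝ × ℝ) : ℝ := B.1 * M.2.2 + M.1 * B.2.2 - 2 * B.2.1 * M.2.1

@[fun_prop]
lemma Continuous.quadForm {α : Type*} [TopologicalSpace α] {f : α → ℝ × ℝ × ℝ} {g : α → ℝ × ℝ}
    (hf : Continuous f) (hg : Continuous g) : Continuous fun x => quadForm (f x) (g x) := by
  unfold _root_.quadForm; fun_prop

@[fun_prop]
lemma continuous_quadDet : Continuous quadDet := by
  unfold quadDet; fun_prop

lemma quadForm_smul (B : ℝ × ℝ × ℝ) (c : ℝ) (p : ℝ × ℝ) :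
    quadForm B (c • p) = c ^ 2 * quadForm B p := by
  simp only [quadForm, Prod.smul_fst, Prod.smul_snd, smul_eq_mul]; ring

lemma quadForm_add_add_quadForm_sub (B : ℝ × ℝ × ℝ) (u v : ℝ × ℝ) :
    quadForm B (u + v) + quadForm B (u - v) = 2 * (quadForm B u + quadForm B v) := by
  simp only [quadForm, Prod.fst_add, Prod.snd_add, Prod.fst_sub, Prod.snd_sub]; ring

lemma quadForm_add_smul (B M : ℝ × ℝ × ℝ) (t : ℝ) (p : ℝ × ℝ) :
    quadForm (B + t • M) p = quadForm B p + t * quadForm M p := by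
  simp only [quadForm, Prod.fst_add, Prod.snd_add, Prod.smul_fst, Prod.smul_snd, smul_eq_mul]; ring

lemma quadDet_add_smul (B M : ℝ × ℝ × ℝ) (t : ℝ) :
    quadDet (B + t • M) = quadDet B + t * (quadMixedDet B M + t * quadDet M) := by
  simp only [quadDet, quadMixedDet, Prod.fst_add, Prod.snd_add, Prod.smul_fst, Prod.smul_snd,
    smul_eq_mul]; ring

lemma sq_add_sq_pos {p : ℝ × ℝ} (hp : p ≠ 0) : 0 < p.1 ^ 2 + p.2 ^ 2 := by
  have : p.1 ≠ 0 ∨ p.2 ≠ 0 := by contrapose! hp; exact Prod.ext hp.1 hp.2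
  rcases this with h | h <;> positivity

lemma quadForm_pos {B : ℝ × ℝ × ℝ} (ha : 0 ≤ B.1) (hdet : 0 < quadDet B) {p : ℝ × ℝ}
    (hp : p ≠ 0) : 0 < quadForm B p := by
  have key : B.1 * quadForm B p = (B.1 * p.1 + B.2.1 * p.2) ^ 2 + quadDet B * p.2 ^ 2 := by
    simp only [quadForm, quadDet]; ring
  have ha' : 0 < B.1 := ha.lt_of_ne fun h => by rw [quadDet, ← h] at hdet; nlinarith
  refine pos_of_mul_pos_right ?_ ha
  rw [key]
  rcases eq_or_ne p.2 0 with h | h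
  · have : p.1 ≠ 0 := fun h' => hp (Prod.ext h' h)
    rw [h, mul_zero, add_zero]; positivity
  · positivity

lemma nonneg_of_forall_mem_sphere {E : Type*} [NormedAddCommGroup E] [NormedSpace ℝ E]
    {g : E → ℝ} (hg : ∀ (c : ℝ) p, g (c • p) = c ^ 2 * g p) (h : ∀ p ∈ sphere (0 : E) 1, 0 ≤ g p)
    (p : E) : 0 ≤ g p := by
  rcases eq_or_ne p 0 with rfl | hp
  · simpa using (hg 0 0).ge
  · rw [← smul_inv_smul₀ (norm_ne_zero_iff.2 hp) p, hg]
    exact mul_nonneg (sq_nonneg _) (h _ (by simp [norm_smul, hp]))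

lemma IsClosed.exists_Ioo_disjoint {Z : Set ℝ} (hZ : IsClosed Z) {a₀ b₀ t : ℝ} (ha₀ : a₀ ∈ Z)
    (hb₀ : b₀ ∈ Z) (ht : t ∈ Icc a₀ b₀) (htZ : t ∉ Z) :
    ∃ a ∈ Z, ∃ b ∈ Z, a < b ∧ Disjoint (Ioo a b) Z := by
  have hlow : BddAbove (Z ∩ Iic t) := ⟨t, fun _ hs => hs.2⟩
  have hhigh : BddBelow (Z ∩ Ici t) := ⟨t, fun _ hs => hs.2⟩
  have ha := (hZ.inter isClosed_Iic).csSup_mem ⟨a₀, ha₀, ht.1⟩ hlow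
  have hb := (hZ.inter isClosed_Ici).csInf_mem ⟨b₀, hb₀, ht.2⟩ hhigh
  have hat : sSup (Z ∩ Iic t) < t := ha.2.lt_of_ne fun h => htZ (h ▸ ha.1)
  have htb : t < sInf (Z ∩ Ici t) := hb.2.lt_of_ne' fun h => htZ (h ▸ hb.1)
  refine ⟨_, ha.1, _, hb.1, hat.trans htb, disjoint_left.2 fun s hs hsZ => ?_⟩
  rcases le_total s t with hst | hst
  · exact (le_csSup hlow ⟨hsZ, hst⟩).not_gt hs.1
  · exact (csInf_le hhigh ⟨hsZ, hst⟩).not_gt hs.2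

lemma apply_abs_smul_add_abs_smul_eq_zero {E : Type*} [AddCommGroup E] [Module ℝ E] {r : E → ℝ}
    (hhom : ∀ (c : ℝ) p, r (c • p) = c ^ 2 * r p) {u v : E} {γ δ : ℝ}
    (h₁ : r (γ • u + δ • v) = 0) (h₂ : r (γ • u - δ • v) = 0) : r (|γ| • u + |δ| • v) = 0 := by
  have hneg : ∀ p, r (-p) = r p := fun p => by simpa using hhom (-1) p
  rcases le_total 0 γ with hγ | hγ <;> rcases le_total 0 δ with hδ | hδ <;>
    simp only [abs_of_nonneg, abs_of_nonpos, hγ, hδ]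
  · exact h₁
  · rwa [neg_smul, ← sub_eq_add_neg]
  · rwa [neg_smul, neg_add_eq_sub, ← neg_sub, hneg]
  · rwa [neg_smul, neg_smul, ← neg_add, hneg]

theorem apply_add_eq_zero {E : Type*} [AddCommGroup E] [Module ℝ E] [TopologicalSpace E]
    [IsTopologicalAddGroup E] [ContinuousSMul ℝ E] {r : E → ℝ} (hcont : Continuous r)
    (hhom : ∀ (c : ℝ) p, r (c • p) = c ^ 2 * r p)
    (hH : ∀ u v, r u = 0 → r v = 0 →
      ∃ γ δ : ℝ, γ ≠ 0 ∧ δ ≠ 0 ∧ r (γ • u + δ • v) = 0 ∧ r (γ • u - δ • v) = 0)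
    {u v : E} (hu : r u = 0) (hv : r v = 0) : r (u + v) = 0 := by
  set Z := {t : ℝ | r ((1 - t) • u + t • v) = 0}
  have hZ : IsClosed Z := isClosed_eq (by fun_prop) continuous_const
  suffices (1 / 2 : ℝ) ∈ Z by
    rw [show u + v = (2 : ℝ) • ((1 - 1 / 2 : ℝ) • u + (1 / 2 : ℝ) • v) by module, hhom, this,
      mul_zero]
  by_contra hZ'
  obtain ⟨a, ha, b, hb, hab, hgap⟩ := hZ.exists_Ioo_disjoint (a₀ := 0) (b₀ := 1)
    (by simpa [Z] using hu) (by simpa [Z] using hv) ⟨by norm_num, by norm_num⟩ hZ'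
  obtain ⟨γ, δ, hγ, hδ, h₁, h₂⟩ := hH _ _ ha hb
  have hzero := apply_abs_smul_add_abs_smul_eq_zero hhom h₁ h₂
  -- `|γ|` and `|δ|` are the barycentric weights of a point `s` strictly between `a` and `b`
  have hγ' := abs_pos.2 hγ
  have hδ' := abs_pos.2 hδ
  obtain ⟨s, hs⟩ : ∃ s, (|γ| + |δ|) * s = |γ| * a + |δ| * b :=
    ⟨_, mul_div_cancel₀ _ (by positivity)⟩
  have hsab : s ∈ Ioo a b := ⟨by nlinarith, by nlinarith⟩
  have hcomb : |γ| • ((1 - a) • u + a • v) + |δ| • ((1 - b) • u + b • v)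
      = (|γ| + |δ|) • ((1 - s) • u + s • v) := by
    linear_combination (norm := module) hs • (u - v)
  rw [hcomb, hhom] at hzero
  exact disjoint_left.1 hgap hsab ((mul_eq_zero.1 hzero).resolve_left (by positivity))

section QuadraticMinorant

variable {q : ℝ × ℝ → ℝ}

def quadMinorants (q : ℝ × ℝ → ℝ) : Set (ℝ × ℝ × ℝ) :=
  {B | (∀ p, quadForm B p ≤ q p) ∧ 0 ≤ B.1 ∧ 0 ≤ B.2.2 ∧ 0 ≤ quadDet B}

lemma sub_quadForm_smul (hhom : ∀ (c : ℝ) p, q (c • p) = c ^ 2 * q p) (B : ℝ × ℝ × ℝ) (c : ℝ)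
    (p : ℝ × ℝ) : q (c • p) - quadForm B (c • p) = c ^ 2 * (q p - quadForm B p) := by
  rw [hhom, quadForm_smul]; ring

lemma isCompact_quadMinorants (q : ℝ × ℝ → ℝ) : IsCompact (quadMinorants q) := by
  refine Metric.isCompact_of_isClosed_isBounded ?_ ?_
  · simp only [quadMinorants, ofPred_and, ofPred_forall]
    exact (isClosed_iInter fun p => isClosed_le (by fun_prop) continuous_const).inter
      ((isClosed_le continuous_const (by fun_prop)).inter
        ((isClosed_le continuous_const (by fun_prop)).inter
          (isClosed_le continuous_const (by fun_prop))))
  · refine isBounded_iff_forall_norm_le.2 ⟨q (1, 0) + q (0, 1), ?_⟩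
    rintro ⟨a, b, c⟩ ⟨hq, ha, hc, hdet⟩
    have h₁ := hq (1, 0)
    have h₂ := hq (0, 1)
    simp only [quadForm, quadDet] at h₁ h₂ hdet ha hc
    simp only [norm_prod_le_iff, Real.norm_eq_abs, abs_le]
    refine ⟨⟨?_, ?_⟩, ⟨?_, ?_⟩, ?_, ?_⟩ <;> nlinarith

lemma exists_mem_quadMinorants_quadDet_pos (hcont : Continuous q)
    (hhom : ∀ (c : ℝ) p, q (c • p) = c ^ 2 * q p) (hpos : ∀ p, p ≠ 0 → 0 < q p) :
    ∃ B ∈ quadMinorants q, 0 < quadDet B := by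
  obtain ⟨ε, hε, hεq⟩ := (isCompact_sphere (0 : ℝ × ℝ) 1).exists_forall_le'
    hcont.continuousOn fun p hp => hpos p (ne_of_mem_sphere hp one_ne_zero)
  refine ⟨(ε / 2, 0, ε / 2), ⟨fun p => sub_nonneg.1 ?_, by positivity, by positivity, ?_⟩, ?_⟩
  · refine nonneg_of_forall_mem_sphere (g := fun p => q p - quadForm _ p)
      (sub_quadForm_smul hhom _) (fun p hp => ?_) p
    have h₁ : |p.1| ≤ 1 := (norm_fst_le p).trans (mem_sphere_zero_iff_norm.1 hp).le
    have h₂ : |p.2| ≤ 1 := (norm_snd_le p).trans (mem_sphere_zero_iff_norm.1 hp).le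
    have := hεq p hp
    rw [← sq_le_one_iff_abs_le_one] at h₁ h₂
    simp only [quadForm]
    nlinarith
  all_goals norm_num [quadDet]; positivity

lemma exists_isMaxOn_quadDet (hcont : Continuous q) (hhom : ∀ (c : ℝ) p, q (c • p) = c ^ 2 * q p)
    (hpos : ∀ p, p ≠ 0 → 0 < q p) :
    ∃ B ∈ quadMinorants q, 0 < quadDet B ∧ IsMaxOn quadDet (quadMinorants q) B := by
  obtain ⟨B₀, hB₀, hdet₀⟩ := exists_mem_quadMinorants_quadDet_pos hcont hhom hpos
  obtain ⟨B, hB, hmax⟩ := (isCompact_quadMinorants q).exists_isMaxOn ⟨B₀, hB₀⟩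
    continuous_quadDet.continuousOn
  exact ⟨B, hB, hdet₀.trans_le (hmax hB₀), hmax⟩

lemma eventually_quadForm_add_smul_le (hcont : Continuous q)
    (hhom : ∀ (c : ℝ) p, q (c • p) = c ^ 2 * q p) {B M : ℝ × ℝ × ℝ}
    (hB : ∀ p, quadForm B p ≤ q p) (hM : ∀ p, p ≠ 0 → q p = quadForm B p → quadForm M p < 0) :
    ∀ᶠ t in 𝓝[≥] (0 : ℝ), ∀ p, quadForm (B + t • M) p ≤ q p := by
  have hS := isCompact_sphere (0 : ℝ × ℝ) 1
  obtain ⟨C, hC⟩ := hS.bddAbove_image (f := quadForm M) (by fun_prop : Continuous _).continuousOn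
  -- away from the contact points, `q - B` has a positive lower bound where `M ≥ 0`
  obtain ⟨m, hm, hmr⟩ := (hS.inter_right (isClosed_le continuous_const
    (by fun_prop : Continuous (quadForm M)))).exists_forall_le' (a := 0)
    (f := fun p => q p - quadForm B p) (by fun_prop) fun p ⟨hp, hMp⟩ =>
      sub_pos.2 <| (hB p).lt_of_ne fun h =>
        (hM p (ne_of_mem_sphere hp one_ne_zero) h.symm).not_ge hMp
  have htC : ∀ᶠ t in 𝓝[≥] (0 : ℝ), t * C < m :=
    ((by fun_prop : Continuous fun t : ℝ => t * C).continuousAt.eventually_lt continuousAt_const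
      (by simpa using hm)).filter_mono nhdsWithin_le_nhds
  filter_upwards [self_mem_nhdsWithin, htC] with t (ht : 0 ≤ t) htC p
  refine sub_nonneg.1 (nonneg_of_forall_mem_sphere (g := fun p => q p - quadForm _ p)
    (sub_quadForm_smul hhom _) (fun p hp => ?_) p)
  have := hB p
  simp only [quadForm_add_smul]
  rcases le_total (quadForm M p) 0 with hMp | hMp
  · nlinarith
  · have := hmr p ⟨hp, hMp⟩
    have := hC (mem_image_of_mem _ hp)
    nlinarith

lemma quadMixedDet_nonpos_of_isMaxOn (hcont : Continuous q)
    (hhom : ∀ (c : ℝ) p, q (c • p) = c ^ 2 * q p) {B M : ℝ × ℝ × ℝ} (hB : B ∈ quadMinorants q)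
    (hdet : 0 < quadDet B) (hmax : IsMaxOn quadDet (quadMinorants q) B)
    (hM : ∀ p, p ≠ 0 → q p = quadForm B p → quadForm M p < 0) : quadMixedDet B M ≤ 0 := by
  by_contra! hD
  obtain ⟨hBq, ha, hc, -⟩ := hB
  have ha' : 0 < B.1 := by simpa [quadForm] using quadForm_pos ha hdet (p := (1, 0)) (by simp)
  have hc' : 0 < B.2.2 := by simpa [quadForm] using quadForm_pos ha hdet (p := (0, 1)) (by simp)
  have hev {x : ℝ} (hx : 0 < x) (y : ℝ) : ∀ᶠ t in 𝓝[>] (0 : ℝ), 0 < x + t * y :=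
    (continuousAt_const.eventually_lt (by fun_prop : Continuous _).continuousAt
      (by simpa using hx)).filter_mono nhdsWithin_le_nhds
  obtain ⟨t, ht, htq, h₁, h₂, h₃⟩ := ((eventually_mem_nhdsWithin (a := (0 : ℝ)) (s := Ioi 0)).and <|
    ((eventually_quadForm_add_smul_le hcont hhom hBq hM).filter_mono
      (nhdsWithin_mono _ Ioi_subset_Ici_self)).and
      <| (hev ha' M.1).and <| (hev hc' M.2.2).and (hev hD (quadDet M))).exists
  have hlt : quadDet B < quadDet (B + t • M) := by
    rw [quadDet_add_smul]; nlinarith [mul_pos (show 0 < t from ht) h₃]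
  refine (hmax ⟨htq, ?_, ?_, (hdet.trans hlt).le⟩).not_gt hlt
  · simpa using h₁.le
  · simpa using h₂.le

lemma exists_contact_cross_ne_zero (hcont : Continuous q)
    (hhom : ∀ (c : ℝ) p, q (c • p) = c ^ 2 * q p) {B : ℝ × ℝ × ℝ} (hB : B ∈ quadMinorants q)
    (hdet : 0 < quadDet B) (hmax : IsMaxOn quadDet (quadMinorants q) B) {z : ℝ × ℝ} (hz : z ≠ 0) :
    ∃ w, q w = quadForm B w ∧ z.1 * w.2 - z.2 * w.1 ≠ 0 := by
  by_contra! hcross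
  have hQz := quadForm_pos hB.2.1 hdet hz
  have hQz' := quadForm_pos hB.2.1 hdet (p := (-z.2, z.1)) fun h => hz <| by
    simp only [Prod.ext_iff, Prod.fst_zero, Prod.snd_zero, neg_eq_zero] at h ⊢; exact h.symm
  set μ := quadForm B z / (2 * quadForm B (-z.2, z.1))
  have hμ : 0 < μ := by positivity
  -- `M p = (z × p)² - μ (z ⬝ p)²` is negative on the line through `z`, yet raises the determinant
  let M : ℝ × ℝ × ℝ := (z.2 ^ 2 - μ * z.1 ^ 2, -(1 + μ) * z.1 * z.2, z.1 ^ 2 - μ * z.2 ^ 2)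
  refine (quadMixedDet_nonpos_of_isMaxOn hcont hhom hB hdet hmax (M := M)
    fun p hp hqp => ?_).not_gt ?_
  · have hM : quadForm M p = (z.1 * p.2 - z.2 * p.1) ^ 2 - μ * (z.1 * p.1 + z.2 * p.2) ^ 2 := by
      simp only [quadForm, M]; ring
    have hlag : (z.1 * p.1 + z.2 * p.2) ^ 2 + (z.1 * p.2 - z.2 * p.1) ^ 2
        = (z.1 ^ 2 + z.2 ^ 2) * (p.1 ^ 2 + p.2 ^ 2) := by ring
    rw [hcross p hqp] at hM hlag
    have := mul_pos (sq_add_sq_pos hz) (sq_add_sq_pos hp)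
    nlinarith
  · have hMB : quadMixedDet B M = quadForm B z - μ * quadForm B (-z.2, z.1) := by
      simp only [quadMixedDet, quadForm, M]; ring
    have : μ * quadForm B (-z.2, z.1) = quadForm B z / 2 := by simp only [μ]; field_simp
    linarith

theorem exists_quadForm_eq (hcont : Continuous q)
    (hhom : ∀ (c : ℝ) p, q (c • p) = c ^ 2 * q p) (hpos : ∀ p, p ≠ 0 → 0 < q p)
    (hH : ∀ u v, ∃ γ δ : ℝ, γ ≠ 0 ∧ δ ≠ 0 ∧
      q (γ • u + δ • v) + q (γ • u - δ • v) ≤ 2 * (γ ^ 2 * q u + δ ^ 2 * q v)) :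
    ∃ B, ∀ p, q p = quadForm B p := by
  obtain ⟨B, hB, hdet, hmax⟩ := exists_isMaxOn_quadDet hcont hhom hpos
  refine ⟨B, fun p => sub_eq_zero.1 ?_⟩
  set r := fun p => q p - quadForm B p
  have hr_hom : ∀ (c : ℝ) p, r (c • p) = c ^ 2 * r p := sub_quadForm_smul hhom B
  have hr_add : ∀ u v, r u = 0 → r v = 0 → r (u + v) = 0 := by
    refine fun u v => apply_add_eq_zero (by fun_prop) hr_hom fun u v hu hv => ?_
    obtain ⟨γ, δ, hγ, hδ, hle⟩ := hH u v
    have hpar := quadForm_add_add_quadForm_sub B (γ • u) (δ • v)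
    have h₁ := hB.1 (γ • u + δ • v)
    have h₂ := hB.1 (γ • u - δ • v)
    rw [quadForm_smul, quadForm_smul] at hpar
    rw [sub_eq_zero.1 hu, sub_eq_zero.1 hv] at hle
    exact ⟨γ, δ, hγ, hδ, by simp only [r]; linarith, by simp only [r]; linarith⟩
  obtain ⟨u, hu, hu₀⟩ := exists_contact_cross_ne_zero hcont hhom hB hdet hmax
    (z := (1, 0)) (by simp)
  obtain ⟨v, hv, huv⟩ := exists_contact_cross_ne_zero hcont hhom hB hdet hmax
    (z := u) fun h => hu₀ (by simp [h])
  have hp : p = ((p.1 * v.2 - p.2 * v.1) / (u.1 * v.2 - u.2 * v.1)) • u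
      + ((u.1 * p.2 - u.2 * p.1) / (u.1 * v.2 - u.2 * v.1)) • v := by
    ext <;> simp only [Prod.fst_add, Prod.snd_add, Prod.smul_fst, Prod.smul_snd, smul_eq_mul] <;>
      rw [div_mul_eq_mul_div, div_mul_eq_mul_div, ← add_div, eq_div_iff huv] <;> ring
  have hu0 : r u = 0 := sub_eq_zero.2 hu
  have hv0 : r v = 0 := sub_eq_zero.2 hv
  rw [hp]
  exact hr_add _ _ (by rw [hr_hom, hu0, mul_zero]) (by rw [hr_hom, hv0, mul_zero])

end QuadraticMinorant

section NormedSpace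

variable {X : Type*} [NormedAddCommGroup X] [NormedSpace ℝ X]

lemma exists_smul_add_smul_sq_le
    (h : ∀ x y : X, ‖x‖ = 1 → ‖y‖ = 1 → ∃ α β : ℝ, α ≠ 0 ∧ β ≠ 0 ∧
      ‖α • x + β • y‖ ^ 2 + ‖α • x - β • y‖ ^ 2 ≤ 2 * (α ^ 2 + β ^ 2)) (u v : X) :
    ∃ γ δ : ℝ, γ ≠ 0 ∧ δ ≠ 0 ∧
      ‖γ • u + δ • v‖ ^ 2 + ‖γ • u - δ • v‖ ^ 2 ≤ 2 * (γ ^ 2 * ‖u‖ ^ 2 + δ ^ 2 * ‖v‖ ^ 2) := by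
  rcases eq_or_ne u 0 with rfl | hu
  · exact ⟨1, 1, one_ne_zero, one_ne_zero, by simp; linarith⟩
  rcases eq_or_ne v 0 with rfl | hv
  · exact ⟨1, 1, one_ne_zero, one_ne_zero, by simp; linarith⟩
  have hu' := norm_ne_zero_iff.2 hu
  have hv' := norm_ne_zero_iff.2 hv
  obtain ⟨α, β, hα, hβ, hle⟩ := h (‖u‖⁻¹ • u) (‖v‖⁻¹ • v) (by simp [norm_smul, hu])
    (by simp [norm_smul, hv])
  refine ⟨α * ‖u‖⁻¹, β * ‖v‖⁻¹, by positivity, by positivity, ?_⟩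
  simp only [mul_smul, mul_pow, inv_pow, inv_mul_cancel_right₀ (pow_ne_zero 2 hu'),
    inv_mul_cancel_right₀ (pow_ne_zero 2 hv')]
  exact hle

theorem exists_quadForm_eq_norm_sq
    (h : ∀ x y : X, ‖x‖ = 1 → ‖y‖ = 1 → ∃ α β : ℝ, α ≠ 0 ∧ β ≠ 0 ∧
      ‖α • x + β • y‖ ^ 2 + ‖α • x - β • y‖ ^ 2 ≤ 2 * (α ^ 2 + β ^ 2))
    (L : ℝ × ℝ →ₗ[ℝ] X) (hL : Function.Injective L) : ∃ B, ∀ p, ‖L p‖ ^ 2 = quadForm B p :=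
  exists_quadForm_eq (q := fun p => ‖L p‖ ^ 2) (L.continuous_of_finiteDimensional.norm.pow 2)
    (fun c p => by simp [norm_smul, mul_pow])
    (fun p hp => by positivity [(map_ne_zero_iff L hL).2 hp])
    (fun u v => by simpa using exists_smul_add_smul_sq_le h (L u) (L v))

lemma norm_add_sq_add_norm_sub_sq_of_not_linearIndependent {x y : X}
    (hxy : ¬ LinearIndependent ℝ ![x, y]) :
    ‖x + y‖ ^ 2 + ‖x - y‖ ^ 2 = 2 * (‖x‖ ^ 2 + ‖y‖ ^ 2) := by
  obtain ⟨w, a, b, rfl, rfl⟩ : ∃ (w : X) (a b : ℝ), x = a • w ∧ y = b • w := by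
    rcases eq_or_ne x 0 with rfl | hx
    · exact ⟨y, 0, 1, by simp, by simp⟩
    · obtain ⟨b, rfl⟩ : ∃ b : ℝ, b • x = y := by simpa [LinearIndependent.pair_iff' hx] using hxy
      exact ⟨x, 1, b, by simp, rfl⟩
  simp only [← add_smul, ← sub_smul, norm_smul, mul_pow, Real.norm_eq_abs, sq_abs]
  ring

end NormedSpace

theorem inner_product_space_of_exists_le_general
    {X : Type*} [NormedAddCommGroup X] [NormedSpace ℝ X]
    (h : ∀ x y : X, ‖x‖ = 1 → ‖y‖ = 1 → ∃ α β : ℝ, α ≠ 0 ∧ β ≠ 0 ∧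
      ‖α • x + β • y‖ ^ 2 + ‖α • x - β • y‖ ^ 2 ≤ 2 * (α ^ 2 + β ^ 2)) :
    ∀ x y : X, ‖x + y‖ ^ 2 + ‖x - y‖ ^ 2 = 2 * (‖x‖ ^ 2 + ‖y‖ ^ 2) := by
  intro x y
  by_cases hxy : LinearIndependent ℝ ![x, y]
  · let L := (LinearMap.toSpanSingleton ℝ X x).coprod (LinearMap.toSpanSingleton ℝ X y)
    have hL : Function.Injective L := (injective_iff_map_eq_zero L).2 fun p hp => by
      obtain ⟨h₁, h₂⟩ := LinearIndependent.pair_iff.1 hxy p.1 p.2 (by simpa [L] using hp)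
      exact Prod.ext h₁ h₂
    obtain ⟨B, hB⟩ := exists_quadForm_eq_norm_sq h L hL
    have hpar := quadForm_add_add_quadForm_sub B (1, 0) (0, 1)
    simp only [← hB, map_add, map_sub] at hpar
    simpa [L] using hpar
  · exact norm_add_sq_add_norm_sub_sq_of_not_linearIndependent hxy

/-- Let `X` be a real normed linear space with `dim X ≥ 2`. If for all unit vectors
`x, y` there exist nonzero reals `α, β` with `‖αx + βy‖² + ‖αx − βy‖² ≤ 2(α² + β²)`,
then the norm of `X` is induced by an inner product, i.e. it satisfies the
parallelogram law. -/
theorem inner_product_space_of_exists_le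
    {X : Type*} [NormedAddCommGroup X] [NormedSpace ℝ X]
    (hdim : 2 ≤ Module.rank ℝ X)
    (h : ∀ x y : X, ‖x‖ = 1 → ‖y‖ = 1 → ∃ α β : ℝ, α ≠ 0 ∧ β ≠ 0 ∧
      ‖α • x + β • y‖ ^ 2 + ‖α • x - β • y‖ ^ 2 ≤ 2 * (α ^ 2 + β ^ 2)) :
    ∀ x y : X, ‖x + y‖ ^ 2 + ‖x - y‖ ^ 2 = 2 * (‖x‖ ^ 2 + ‖y‖ ^ 2) :=
  inner_product_space_of_exists_le_general h
end

section
/- Let X be a real normed linear space with dim X ≥ 2. If for all x, y ∈ S_X there exist nonzero real numbers α, β such that ‖αx + βy‖² + ‖αx − βy‖² ≥ 2(α² + β²), then the norm of X is induced by an inner product. -/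
/-!
Reduce to the plane spanned by `x` and `y`, where the norm becomes a continuous, absolutely
homogeneous, positive function `N` on `ℂ`. Take its John ellipse: a linear map `A` of maximal
determinant with `N ∘ A ≤ ‖·‖`. If all contact points `N (A z) = ‖z‖ = 1` were on one line, a
stretch across that line would keep `N ∘ A ≤ ‖·‖` and increase the determinant; so there are
two independent contact directions. For contact points `z, w`, the Euclidean parallelogram
identity and `N ∘ A ≤ ‖·‖` turn the hypothesis into equalities: `|α| z + |β| w` is again a
contact direction, strictly between `z` and `w`. A closed, `π`-periodic set of angles with this
betweenness property and containing two angles not congruent mod `π` is all of `ℝ`. Hence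
`N ∘ A` is the Euclidean norm, which satisfies the parallelogram law.
-/

open Real Set Complex

def HasParallelogramLowerBound {E : Type*} [AddCommGroup E] [Module ℝ E] (N : E → ℝ) : Prop :=
  ∀ x y, N x = 1 → N y = 1 → ∃ α β : ℝ, α ≠ 0 ∧ β ≠ 0 ∧
    2 * (α ^ 2 + β ^ 2) ≤ N (α • x + β • y) ^ 2 + N (α • x - β • y) ^ 2

theorem HasParallelogramLowerBound.comp {E F : Type*} [AddCommGroup E] [Module ℝ E]
    [AddCommGroup F] [Module ℝ F] {N : E → ℝ} (hN : HasParallelogramLowerBound N)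
    (f : F →ₗ[ℝ] E) : HasParallelogramLowerBound (N ∘ f) := fun x y hx hy => by
  simpa using hN (f x) (f y) hx hy

section Homogeneous

variable {E : Type*} [NormedAddCommGroup E] [NormedSpace ℝ E] {N : E → ℝ}

theorem eq_norm_mul_of_abs_homogeneous (hsmul : ∀ (c : ℝ) x, N (c • x) = |c| * N x) (x : E) :
    N x = ‖x‖ * N (‖x‖⁻¹ • x) := by
  rcases eq_or_ne x 0 with rfl | hx
  · simpa using hsmul 0 0
  · rw [hsmul, abs_of_pos (inv_pos.2 (norm_pos_iff.2 hx)),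
      mul_inv_cancel_left₀ (norm_ne_zero_iff.2 hx)]

variable [Nontrivial E]

section Proper

variable [ProperSpace E]

theorem exists_pos_mul_norm_le_of_abs_homogeneous (hcont : Continuous N)
    (hsmul : ∀ (c : ℝ) x, N (c • x) = |c| * N x) (hpos : ∀ x, x ≠ 0 → 0 < N x) :
    ∃ m > 0, ∀ x, m * ‖x‖ ≤ N x := by
  obtain ⟨x₀, hx₀, hmin⟩ := (isCompact_sphere (0 : E) 1).exists_isMinOn
    (NormedSpace.sphere_nonempty.2 zero_le_one) hcont.continuousOn
  refine ⟨N x₀, hpos x₀ (ne_zero_of_mem_unit_sphere ⟨x₀, hx₀⟩), fun x => ?_⟩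
  rcases eq_or_ne x 0 with rfl | hx
  · simpa using (hsmul 0 0).ge
  · rw [eq_norm_mul_of_abs_homogeneous hsmul x, mul_comm (N x₀)]
    exact mul_le_mul_of_nonneg_left (hmin (by simp [norm_smul, hx])) (norm_nonneg x)

theorem exists_pos_le_mul_norm_of_abs_homogeneous (hcont : Continuous N)
    (hsmul : ∀ (c : ℝ) x, N (c • x) = |c| * N x) (hpos : ∀ x, x ≠ 0 → 0 < N x) :
    ∃ C > 0, ∀ x, N x ≤ C * ‖x‖ := by
  obtain ⟨x₀, hx₀, hmax⟩ := (isCompact_sphere (0 : E) 1).exists_isMaxOn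
    (NormedSpace.sphere_nonempty.2 zero_le_one) hcont.continuousOn
  refine ⟨N x₀, hpos x₀ (ne_zero_of_mem_unit_sphere ⟨x₀, hx₀⟩), fun x => ?_⟩
  rcases eq_or_ne x 0 with rfl | hx
  · simpa using (hsmul 0 0).le
  · rw [eq_norm_mul_of_abs_homogeneous hsmul x, mul_comm (N x₀)]
    exact mul_le_mul_of_nonneg_left (hmax (by simp [norm_smul, hx])) (norm_nonneg x)

end Proper

variable [FiniteDimensional ℝ E]

-- The John ellipse of `N`: `A` maps the Euclidean unit ball into the unit ball of `N`.
theorem exists_forall_det_le_of_abs_homogeneous (hcont : Continuous N)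
    (hsmul : ∀ (c : ℝ) x, N (c • x) = |c| * N x) (hpos : ∀ x, x ≠ 0 → 0 < N x) :
    ∃ A : E →ₗ[ℝ] E, (∀ x, N (A x) ≤ ‖x‖) ∧ 0 < LinearMap.det A ∧
      ∀ B : E →ₗ[ℝ] E, (∀ x, N (B x) ≤ ‖x‖) → LinearMap.det B ≤ LinearMap.det A := by
  obtain ⟨m, hm, hmN⟩ := exists_pos_mul_norm_le_of_abs_homogeneous hcont hsmul hpos
  obtain ⟨C, hC, hNC⟩ := exists_pos_le_mul_norm_of_abs_homogeneous hcont hsmul hpos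
  set K := {A : E →L[ℝ] E | ∀ x, N (A x) ≤ ‖x‖}
  have hK : IsCompact K := by
    refine (isCompact_closedBall (0 : E →L[ℝ] E) m⁻¹).of_isClosed_subset ?_ fun A hA => ?_
    · simp only [K, ofPred_forall]
      exact isClosed_iInter fun x =>
        isClosed_le (hcont.comp ((ContinuousLinearMap.apply ℝ E x).continuous)) continuous_const
    · refine mem_closedBall_zero_iff.2 (A.opNorm_le_bound (inv_nonneg.2 hm.le) fun x => ?_)
      rw [inv_mul_eq_div, le_div_iff₀' hm]
      exact (hmN (A x)).trans (hA x)
  have hCK : C⁻¹ • ContinuousLinearMap.id ℝ E ∈ K := fun x => by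
    rw [smul_apply, ContinuousLinearMap.id_apply, hsmul,
      abs_of_pos (inv_pos.2 hC), inv_mul_le_iff₀ hC]
    exact hNC x
  obtain ⟨A, hAK, hAmax⟩ :=
    hK.exists_isMaxOn ⟨_, hCK⟩ ContinuousLinearMap.continuous_det.continuousOn
  refine ⟨A, hAK, ?_, fun B hB => hAmax (show B.toContinuousLinearMap ∈ K from hB)⟩
  refine lt_of_lt_of_le ?_ (hAmax hCK)
  simp [ContinuousLinearMap.det, LinearMap.det_smul, hC]

end Homogeneous

theorem Real.eq_univ_of_periodic_of_exists_mem_Ioo {T : Set ℝ} (hT : IsClosed T)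
    (hper : Function.Periodic (· ∈ T) π)
    (hbetween : ∀ s ∈ T, ∀ t ∈ T, s < t → t < s + π → ∃ r ∈ Ioo s t, r ∈ T)
    {s t : ℝ} (hs : s ∈ T) (ht : t ∈ T) (hst : sin (t - s) ≠ 0) : T = univ := by
  have toIcoMod_mem : ∀ x ∈ T, ∀ a, toIcoMod pi_pos a x ∈ T := fun x hx a => by
    rw [← self_sub_toIcoDiv_zsmul, zsmul_eq_mul]
    exact (hper.sub_int_mul_eq _).mpr hx
  refine eq_univ_of_forall fun c => by_contra fun hc => ?_
  obtain ⟨haT, hac⟩ : sSup (T ∩ Iic c) ∈ T ∩ Iic c :=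
    (hT.inter isClosed_Iic).csSup_mem
      ⟨_, toIcoMod_mem s hs (c - π), (toIcoMod_mem_Ico pi_pos _ s).2.le.trans (by simp)⟩
      ⟨c, fun _ hr => hr.2⟩
  obtain ⟨hbT, hcb⟩ : sInf (T ∩ Ici c) ∈ T ∩ Ici c :=
    (hT.inter isClosed_Ici).csInf_mem
      ⟨_, toIcoMod_mem s hs c, (toIcoMod_mem_Ico pi_pos _ s).1⟩ ⟨c, fun _ hr => hr.2⟩
  set a := sSup (T ∩ Iic c)
  set b := sInf (T ∩ Ici c)
  have hgap : ∀ r ∈ T, r ≤ a ∨ b ≤ r := fun r hr => (le_total r c).imp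
    (fun hrc => le_csSup ⟨c, fun _ h => h.2⟩ ⟨hr, hrc⟩)
    (fun hcr => csInf_le ⟨c, fun _ h => h.2⟩ ⟨hr, hcr⟩)
  have hac' : a < c := lt_of_le_of_ne hac fun h => hc (h ▸ haT)
  have hcb' : c < b := lt_of_le_of_ne hcb fun h => hc (h ▸ hbT)
  have hba : b ≤ a + π :=
    ((hgap _ ((hper a).mpr haT)).resolve_left fun h => by linarith [pi_pos])
  rcases hba.lt_or_eq with hba | hba
  · obtain ⟨r, ⟨har, hrb⟩, hrT⟩ := hbetween a haT b hbT (by linarith) hba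
    rcases hgap r hrT with h | h <;> linarith
  · have hcoset : ∀ x ∈ T, ∃ k : ℤ, x = a + k * π := fun x hx => by
      have hmem := toIcoMod_mem_Ico pi_pos a x
      have hxa : toIcoMod pi_pos a x = a :=
        ((hgap _ (toIcoMod_mem x hx a)).resolve_right fun h => by linarith [hmem.2]).antisymm
          hmem.1
      have hdiv := self_sub_toIcoDiv_zsmul pi_pos a x
      rw [hxa, zsmul_eq_mul] at hdiv
      exact ⟨toIcoDiv pi_pos a x, by linarith⟩
    obtain ⟨k, rfl⟩ := hcoset s hs
    obtain ⟨l, rfl⟩ := hcoset t ht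
    exact hst (by simpa [← sub_mul] using sin_int_mul_pi (l - k))

theorem eq_norm_abs_smul_add_abs_smul_of_le_norm {E : Type*} [NormedAddCommGroup E]
    [InnerProductSpace ℝ E] {M : E → ℝ} (hsmul : ∀ (c : ℝ) x, M (c • x) = |c| * M x)
    (h0 : ∀ x, 0 ≤ M x) (hle : ∀ x, M x ≤ ‖x‖) {x y : E} (hx : ‖x‖ = 1) (hy : ‖y‖ = 1)
    {α β : ℝ} (hα : α ≠ 0) (hβ : β ≠ 0)
    (h : 2 * (α ^ 2 + β ^ 2) ≤ M (α • x + β • y) ^ 2 + M (α • x - β • y) ^ 2) :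
    M (|α| • x + |β| • y) = ‖|α| • x + |β| • y‖ := by
  have hpar : ‖α • x + β • y‖ ^ 2 + ‖α • x - β • y‖ ^ 2 = 2 * (α ^ 2 + β ^ 2) := by
    simp [parallelogram_law_with_norm ℝ, norm_smul, hx, hy]
  have hsq : ∀ u, M u ^ 2 ≤ ‖u‖ ^ 2 := fun u => pow_le_pow_left₀ (h0 u) (hle u) 2
  have hadd : M (α • x + β • y) = ‖α • x + β • y‖ :=
    (sq_eq_sq₀ (h0 _) (norm_nonneg _)).1 (by linarith [hsq (α • x + β • y), hsq (α • x - β • y)])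
  have hsub : M (α • x - β • y) = ‖α • x - β • y‖ :=
    (sq_eq_sq₀ (h0 _) (norm_nonneg _)).1 (by linarith [hsq (α • x + β • y), hsq (α • x - β • y)])
  have hneg : ∀ u, M (-u) = M u := fun u => by simpa using hsmul (-1) u
  rcases hα.lt_or_gt with hα | hα <;> rcases hβ.lt_or_gt with hβ | hβ
  · rw [abs_of_neg hα, abs_of_neg hβ, show -α • x + -β • y = -(α • x + β • y) by module, hneg,
      norm_neg, hadd]
  · rw [abs_of_neg hα, abs_of_pos hβ, show -α • x + β • y = -(α • x - β • y) by module, hneg,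
      norm_neg, hsub]
  · rw [abs_of_pos hα, abs_of_neg hβ, show α • x + -β • y = α • x - β • y by module, hsub]
  · rw [abs_of_pos hα, abs_of_pos hβ, hadd]

theorem Complex.arg_add_mul_exp_mem_Ioo {a b θ : ℝ} (ha : 0 < a) (hb : 0 < b) (hθ : 0 < θ)
    (hθπ : θ < π) : arg (a + b * exp (θ * I)) ∈ Ioo 0 θ := by
  set w : ℂ := a + b * exp (θ * I)
  have hsin := sin_pos_of_pos_of_lt_pi hθ hθπ
  have him : 0 < w.im := by simpa [w, exp_ofReal_mul_I_im] using mul_pos hb hsin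
  refine ⟨(arg_nonneg_iff.2 him.le).lt_of_ne fun h => ?_, lt_of_not_ge fun h => ?_⟩
  · exact him.ne' (arg_eq_zero_iff.1 h.symm).2
  · -- rotating `w` back by `θ` lands in the lower half-plane
    have hrot : (w * exp (↑(-θ) * I)).im = -(a * Real.sin θ) := by
      simp only [w, mul_im, add_re, add_im, ofReal_re, ofReal_im, re_ofReal_mul,
        exp_ofReal_mul_I_re, exp_ofReal_mul_I_im, Real.cos_neg, Real.sin_neg]
      ring
    have hpolar : (w * exp (↑(-θ) * I)).im = ‖w‖ * Real.sin (arg w - θ) := by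
      rw [← norm_mul_exp_arg_mul_I w, mul_assoc, ← Complex.exp_add, norm_mul_exp_arg_mul_I,
        ← add_mul, ← ofReal_add, im_ofReal_mul, exp_ofReal_mul_I_im, ← sub_eq_add_neg]
    have := Real.sin_nonneg_of_nonneg_of_le_pi (sub_nonneg.2 h) (by linarith [arg_le_pi w])
    nlinarith [norm_nonneg w, mul_pos ha hsin]

theorem exists_mem_Ioo_apply_exp_eq_one {M : ℂ → ℝ} (hsmul : ∀ (c : ℝ) z, M (c • z) = |c| * M z)
    (h0 : ∀ z, 0 ≤ M z) (hle : ∀ z, M z ≤ ‖z‖) (hM : HasParallelogramLowerBound M) {s t : ℝ}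
    (hs : M (cexp (s * I)) = 1) (ht : M (cexp (t * I)) = 1) (hst : s < t) (hts : t < s + π) :
    ∃ r ∈ Ioo s t, M (cexp (r * I)) = 1 := by
  obtain ⟨α, β, hα, hβ, h⟩ := hM _ _ hs ht
  have hu := eq_norm_abs_smul_add_abs_smul_of_le_norm hsmul h0 hle (norm_exp_ofReal_mul_I s)
    (norm_exp_ofReal_mul_I t) hα hβ h
  set w : ℂ := |α| + |β| * cexp ((t - s : ℝ) * I)
  have hw : |α| • cexp (s * I) + |β| • cexp (t * I) = cexp (s * I) * w := by
    have : cexp (t * I) = cexp (s * I) * cexp ((t - s : ℝ) * I) := by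
      rw [← Complex.exp_add]
      push_cast
      ring_nf
    rw [this, real_smul, real_smul]
    ring
  have harg : arg w ∈ Ioo 0 (t - s) :=
    arg_add_mul_exp_mem_Ioo (abs_pos.2 hα) (abs_pos.2 hβ) (sub_pos.2 hst) (by linarith)
  have hw₀ : w ≠ 0 := fun h => harg.1.ne' (by rw [h, arg_zero])
  refine ⟨s + arg w, ⟨by linarith [harg.1], by linarith [harg.2]⟩, ?_⟩
  have hexp : cexp (↑(s + arg w) * I) = ‖w‖⁻¹ • (|α| • cexp (s * I) + |β| • cexp (t * I)) := by
    rw [hw, real_smul, ofReal_inv,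
      eq_inv_mul_iff_mul_eq₀ (ofReal_ne_zero.2 (norm_ne_zero_iff.2 hw₀)), ofReal_add, add_mul, Complex.exp_add, mul_left_comm, norm_mul_exp_arg_mul_I]
  rw [hexp, hsmul, hu, hw, norm_mul, norm_exp_ofReal_mul_I, one_mul,
    abs_of_pos (inv_pos.2 (norm_pos_iff.2 hw₀)), inv_mul_cancel₀ (norm_ne_zero_iff.2 hw₀)]

namespace Complex

noncomputable def scaleReIm (a b : ℝ) : ℂ →ₗ[ℝ] ℂ :=
  equivRealProdLm.symm.toLinearMap ∘ₗ (a • LinearMap.id).prodMap (b • LinearMap.id) ∘ₗ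
    equivRealProdLm.toLinearMap

@[simp]
theorem scaleReIm_apply_re (a b : ℝ) (z : ℂ) : (scaleReIm a b z).re = a * z.re := rfl

@[simp]
theorem scaleReIm_apply_im (a b : ℝ) (z : ℂ) : (scaleReIm a b z).im = b * z.im := rfl

theorem det_scaleReIm (a b : ℝ) : LinearMap.det (scaleReIm a b) = a * b := by
  have h := LinearMap.det_conj ((a • LinearMap.id).prodMap (b • LinearMap.id)) equivRealProdLm.symm
  rw [equivRealProdLm.symm_symm] at h
  rw [scaleReIm, h, LinearMap.det_prodMap]
  simp

variable {M : ℂ → ℝ}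

theorem exists_forall_le_one_sub_of_sq_im (hcont : Continuous M) (hle : ∀ z, M z ≤ ‖z‖)
    (hcontact : ∀ z, ‖z‖ = 1 → M z = 1 → z.im = 0) :
    ∃ δ, 0 < δ ∧ δ ≤ 1 ∧ ∀ z, ‖z‖ = 1 → 1 ≤ 3 * z.im ^ 2 → M z ≤ 1 - δ := by
  have hS : IsCompact (Metric.sphere (0 : ℂ) 1 ∩ {z | 1 ≤ 3 * z.im ^ 2}) :=
    (isCompact_sphere 0 1).inter_right (isClosed_le continuous_const (by fun_prop))
  obtain ⟨z₀, ⟨hz₀, hz₀im⟩, hmax⟩ := hS.exists_isMaxOn ⟨I, by simp, by simp⟩ hcont.continuousOn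
  have hz₀1 : ‖z₀‖ = 1 := by simpa using hz₀
  have hlt : M z₀ < 1 := (hz₀1 ▸ hle z₀).lt_of_ne fun h => by
    simp only [mem_ofPred_eq, hcontact z₀ hz₀1 h] at hz₀im
    norm_num at hz₀im
  refine ⟨min (1 - M z₀) 1, lt_min (by linarith) one_pos, min_le_right _ _, fun z hz hzim => ?_⟩
  have : M z ≤ M z₀ := hmax ⟨(show z ∈ Metric.sphere (0 : ℂ) 1 by simpa using hz), hzim⟩
  linarith [min_le_left (1 - M z₀) 1]

/- Here `a ≤ 1 ≤ b`. Where `3 * im ^ 2 ≤ ‖z‖ ^ 2` the stretch does not increase the Euclidean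
norm; elsewhere it lands in the sector where `M ≤ 1 - δ`, it increases the norm by at most `b`,
and `b * (1 - δ) ≤ 1`. -/
theorem apply_scaleReIm_le_norm (hsmul : ∀ (c : ℝ) z, M (c • z) = |c| * M z)
    (hle : ∀ z, M z ≤ ‖z‖) {δ a b : ℝ} (hδ : 0 < δ) (hδ1 : δ ≤ 1)
    (hsector : ∀ z, ‖z‖ = 1 → 1 ≤ 3 * z.im ^ 2 → M z ≤ 1 - δ) (hb : 0 ≤ b)
    (ha2 : a ^ 2 = 1 - δ / 3) (hb2 : b ^ 2 = 1 + 2 * δ / 3) (z : ℂ) :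
    M (scaleReIm a b z) ≤ ‖z‖ := by
  set w := scaleReIm a b z
  have hw2 : ‖w‖ ^ 2 = a ^ 2 * z.re ^ 2 + b ^ 2 * z.im ^ 2 := by
    rw [Complex.sq_norm, normSq_apply, scaleReIm_apply_re, scaleReIm_apply_im]
    ring
  have hz2 : ‖z‖ ^ 2 = z.re ^ 2 + z.im ^ 2 := by
    rw [Complex.sq_norm, normSq_apply]
    ring
  by_cases hz : 3 * z.im ^ 2 ≤ ‖z‖ ^ 2
  · refine (hle w).trans ((pow_le_pow_iff_left₀ (norm_nonneg _) (norm_nonneg _) two_ne_zero).1 ?_)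
    nlinarith [mul_le_mul_of_nonneg_left hz (by positivity : 0 ≤ δ / 3)]
  · push Not at hz
    have hw₀ : 0 < ‖w‖ := by
      have : 0 < ‖w‖ ^ 2 := by nlinarith [sq_nonneg z.re, sq_nonneg z.im]
      exact norm_pos_iff.2 fun h => by simp [h] at this
    have hd : M (‖w‖⁻¹ • w) ≤ 1 - δ := by
      refine hsector _ (by simp [hw₀.ne']) ?_
      rw [smul_im, smul_eq_mul, mul_pow, inv_pow, ← div_eq_inv_mul, mul_div_assoc',
        le_div_iff₀ (by positivity)]
      simp only [w, scaleReIm_apply_im]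
      nlinarith
    have hwz : ‖w‖ ≤ b * ‖z‖ :=
      (pow_le_pow_iff_left₀ (norm_nonneg _) (by positivity) two_ne_zero).1 (by nlinarith)
    have hb1 : b * (1 - δ) ≤ 1 := by nlinarith
    calc M w = ‖w‖ * M (‖w‖⁻¹ • w) := eq_norm_mul_of_abs_homogeneous hsmul w
      _ ≤ ‖w‖ * (1 - δ) := by gcongr
      _ ≤ b * ‖z‖ * (1 - δ) := by gcongr
      _ ≤ ‖z‖ := by nlinarith [norm_nonneg z]

theorem exists_one_lt_mul_forall_apply_scaleReIm_le (hcont : Continuous M)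
    (hsmul : ∀ (c : ℝ) z, M (c • z) = |c| * M z) (hle : ∀ z, M z ≤ ‖z‖)
    (hcontact : ∀ z, ‖z‖ = 1 → M z = 1 → z.im = 0) :
    ∃ a b : ℝ, 1 < a * b ∧ ∀ z, M (scaleReIm a b z) ≤ ‖z‖ := by
  obtain ⟨δ, hδ, hδ1, hsector⟩ := exists_forall_le_one_sub_of_sq_im hcont hle hcontact
  refine ⟨√(1 - δ / 3), √(1 + 2 * δ / 3), ?_, apply_scaleReIm_le_norm hsmul hle hδ hδ1 hsector
    (sqrt_nonneg _) (sq_sqrt (by linarith)) (sq_sqrt (by linarith))⟩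
  rw [← sqrt_mul (by linarith), lt_sqrt zero_le_one]
  nlinarith

end Complex

theorem exists_sin_sub_ne_zero_of_forall_det_le {N : ℂ → ℝ} (hcont : Continuous N)
    (hsmul : ∀ (c : ℝ) z, N (c • z) = |c| * N z) {A : ℂ →ₗ[ℝ] ℂ} (hA : ∀ z, N (A z) ≤ ‖z‖)
    (hdet : 0 < LinearMap.det A)
    (hmax : ∀ B : ℂ →ₗ[ℝ] ℂ, (∀ z, N (B z) ≤ ‖z‖) → LinearMap.det B ≤ LinearMap.det A) :
    ∃ s t : ℝ, N (A (cexp (s * I))) = 1 ∧ N (A (cexp (t * I))) = 1 ∧ Real.sin (t - s) ≠ 0 := by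
  by_contra! hcon
  obtain ⟨s₀, hs₀⟩ : ∃ s₀ : ℝ, ∀ t : ℝ, N (A (cexp (t * I))) = 1 → Real.sin (t - s₀) = 0 := by
    by_cases h : ∃ s : ℝ, N (A (cexp (s * I))) = 1
    · obtain ⟨s, hs⟩ := h
      exact ⟨s, fun t ht => hcon s t hs ht⟩
    · exact ⟨0, fun t ht => absurd ⟨t, ht⟩ h⟩
  set R := (rotation (Circle.exp s₀)).toLinearEquiv
  have hR : ∀ z, R z = cexp (s₀ * I) * z := fun z => rfl
  obtain ⟨a, b, hab, hD⟩ := exists_one_lt_mul_forall_apply_scaleReIm_le (M := fun z => N (A (R z)))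
    (hcont.comp (A ∘ₗ R.toLinearMap).continuous_of_finiteDimensional)
    (fun c z => by simp only [map_smul, hsmul]) (fun z => by simpa [hR] using hA (R z))
    (fun z hz hAz => by
      have hz' : cexp (arg z * I) = z := by simpa [hz] using norm_mul_exp_arg_mul_I z
      have := hs₀ (s₀ + arg z) (by
        rwa [ofReal_add, add_mul, Complex.exp_add, hz', ← hR])
      rw [add_sub_cancel_left, sin_arg, hz, div_one] at this
      exact this)
  set B := A ∘ₗ R.toLinearMap ∘ₗ scaleReIm a b ∘ₗ R.symm.toLinearMap
  have hB : ∀ z, N (B z) ≤ ‖z‖ := fun z =>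
    (hD (R.symm z)).trans_eq ((rotation (Circle.exp s₀)).symm.norm_map z)
  have hdetB : LinearMap.det B = LinearMap.det A * (a * b) := by
    rw [LinearMap.det_comp, LinearMap.det_conj, det_scaleReIm]
  nlinarith [hmax B hB]

theorem parallelogram_law_of_hasParallelogramLowerBound {N : ℂ → ℝ} (hcont : Continuous N)
    (hsmul : ∀ (c : ℝ) z, N (c • z) = |c| * N z) (hpos : ∀ z, z ≠ 0 → 0 < N z)
    (hN : HasParallelogramLowerBound N) (u v : ℂ) :
    N (u + v) ^ 2 + N (u - v) ^ 2 = 2 * (N u ^ 2 + N v ^ 2) := by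
  obtain ⟨A, hA, hdet, hmax⟩ := exists_forall_det_le_of_abs_homogeneous hcont hsmul hpos
  obtain ⟨s, t, hs, ht, hst⟩ := exists_sin_sub_ne_zero_of_forall_det_le hcont hsmul hA hdet hmax
  have hN0 : ∀ z, 0 ≤ N z := fun z => by
    rcases eq_or_ne z 0 with rfl | hz
    · simpa using (hsmul 0 0).ge
    · exact (hpos z hz).le
  have hneg : ∀ z, N (A (-z)) = N (A z) := fun z => by simpa using hsmul (-1) (A z)
  have hcircle : {r : ℝ | N (A (cexp (r * I))) = 1} = univ := by
    refine Real.eq_univ_of_periodic_of_exists_mem_Ioo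
      (isClosed_eq (by fun_prop) continuous_const) (fun r => ?_)
      (fun s hs t ht hst hts => exists_mem_Ioo_apply_exp_eq_one (M := fun z => N (A z))
        (fun c z => by simp only [map_smul, hsmul]) (fun z => hN0 _) hA (hN.comp A) hs ht hst hts)
      hs ht hst
    simp only [mem_ofPred_eq, ofReal_add, add_mul, Complex.exp_add, exp_pi_mul_I, mul_neg_one, hneg]
  have hnorm : ∀ z, N (A z) = ‖z‖ := fun z => by
    have hr : N (A (cexp (arg z * I))) = 1 := eq_univ_iff_forall.1 hcircle (arg z)
    calc N (A z) = N (A (‖z‖ • cexp (arg z * I))) := by rw [real_smul, norm_mul_exp_arg_mul_I]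
      _ = ‖z‖ := by rw [map_smul, hsmul, hr, abs_norm, mul_one]
  have hsurj : Function.Surjective A :=
    ((Module.End.isUnit_iff A).1 ((LinearMap.isUnit_iff_isUnit_det A).2 hdet.ne'.isUnit)).2
  obtain ⟨z, rfl⟩ := hsurj u
  obtain ⟨w, rfl⟩ := hsurj v
  rw [← map_add, ← map_sub, hnorm, hnorm, hnorm, hnorm]
  exact parallelogram_law_with_norm ℝ z w

theorem norm_smul_add_smul_sq_add_norm_smul_sub_smul_sq {X : Type*} [NormedAddCommGroup X]
    [NormedSpace ℝ X] (a b : ℝ) (u : X) :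
    ‖a • u + b • u‖ ^ 2 + ‖a • u - b • u‖ ^ 2 = 2 * (‖a • u‖ ^ 2 + ‖b • u‖ ^ 2) := by
  simp only [← add_smul, ← sub_smul, norm_smul, mul_pow, Real.norm_eq_abs, sq_abs]
  ring

theorem exists_injective_linearMap_complex {X : Type*} [AddCommGroup X] [Module ℝ X] {x y : X}
    (h : LinearIndependent ℝ ![x, y]) :
    ∃ f : ℂ →ₗ[ℝ] X, Function.Injective f ∧ f 1 = x ∧ f I = y := by
  refine ⟨reLm.smulRight x + imLm.smulRight y, (injective_iff_map_eq_zero _).2 fun z hz => ?_,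
    by simp, by simp⟩
  obtain ⟨hre, him⟩ := LinearIndependent.pair_iff.1 h z.re z.im (by simpa using hz)
  exact Complex.ext hre him

theorem inner_product_space_of_exists_ge_general
    {X : Type*} [NormedAddCommGroup X] [NormedSpace ℝ X]
    (h : ∀ x y : X, ‖x‖ = 1 → ‖y‖ = 1 → ∃ α β : ℝ, α ≠ 0 ∧ β ≠ 0 ∧
      2 * (α ^ 2 + β ^ 2) ≤ ‖α • x + β • y‖ ^ 2 + ‖α • x - β • y‖ ^ 2) :
    ∀ x y : X, ‖x + y‖ ^ 2 + ‖x - y‖ ^ 2 = 2 * (‖x‖ ^ 2 + ‖y‖ ^ 2) := by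
  intro x y
  by_cases hxy : LinearIndependent ℝ ![x, y]
  · obtain ⟨f, hf, rfl, rfl⟩ := exists_injective_linearMap_complex hxy
    have := parallelogram_law_of_hasParallelogramLowerBound (N := fun z => ‖f z‖)
      (by fun_prop) (fun c z => by rw [map_smul, norm_smul, Real.norm_eq_abs])
      (fun z hz => norm_pos_iff.2 ((map_ne_zero_iff f hf).2 hz))
      (HasParallelogramLowerBound.comp (N := norm) h f) 1 I
    simpa using this
  · rcases eq_or_ne x 0 with rfl | hx
    · simpa using norm_smul_add_smul_sq_add_norm_smul_sub_smul_sq 0 1 y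
    · obtain ⟨a, rfl⟩ : ∃ a : ℝ, a • x = y := by
        simpa [LinearIndependent.pair_iff' hx] using hxy
      simpa using norm_smul_add_smul_sq_add_norm_smul_sub_smul_sq 1 a x

/-- Let `X` be a real normed linear space with `dim X ≥ 2`. If for all unit vectors
`x, y` there exist nonzero reals `α, β` with `‖αx + βy‖² + ‖αx − βy‖² ≥ 2(α² + β²)`,
then the norm of `X` is induced by an inner product, i.e. it satisfies the
parallelogram law. -/
theorem inner_product_space_of_exists_ge
    {X : Type*} [NormedAddCommGroup X] [NormedSpace ℝ X]
    (hdim : 2 ≤ Module.rank ℝ X)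
    (h : ∀ x y : X, ‖x‖ = 1 → ‖y‖ = 1 → ∃ α β : ℝ, α ≠ 0 ∧ β ≠ 0 ∧
      2 * (α ^ 2 + β ^ 2) ≤ ‖α • x + β • y‖ ^ 2 + ‖α • x - β • y‖ ^ 2) :
    ∀ x y : X, ‖x + y‖ ^ 2 + ‖x - y‖ ^ 2 = 2 * (‖x‖ ^ 2 + ‖y‖ ^ 2) :=
  inner_product_space_of_exists_ge_general h
end
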